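/- arXiv:1509.01877 — 5 statements merged into one kernel-verified Lean document; each statement's English description precedes it below -/
import Mathlib

section
/- Let C = {θ ∈ ℝⁿ : Aθ ≤ b} be a nonempty convex polyhedron with A ∈ ℝ^{m×n} having rows a₁,…,a_m, and let θ̂(y) = P_C(y) be the metric projection of y onto C. Then for Lebesgue-almost every y ∈ ℝⁿ, the map θ̂ is differentiable at y and its divergence satisfies D(y) = n − rank(A_{J_y}), where J_y = {1 ≤ i ≤ m : ⟨a_i, θ̂(y)⟩ = b_i} is the set of binding constraints at θ̂(y) and A_{J_y} is the submatrix of A with rows indexed by J_y. -/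
open Matrix MeasureTheory

/-- The divergence of a map `ℝⁿ → ℝⁿ` at `y`: the trace of its derivative,
`∑ i, ∂fᵢ/∂yᵢ (y)`. -/
noncomputable def divg {n : ℕ} (f : (Fin n → ℝ) → (Fin n → ℝ)) (y : Fin n → ℝ) : ℝ :=
  ∑ i, fderiv ℝ f y (Pi.single i 1) i

open Module Submodule Filter Topology WithLp

/-!
Write `P_{J,θ₀}` for the orthogonal projection onto the affine subspace through `θ₀` cut out by
the constraints `J`, and let `R_J` be the set of `y` with `P_{J,θ₀} y ∈ C` and `y - P_{J,θ₀} y` in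
the normal cone spanned by the rows `aᵢ`, `i ∈ J`. By the variational inequality characterising
`θ̂`, on `R_J` the projection `θ̂` equals the affine map `P_{J,θ₀}`, and every `y` lies in `R_J`
for its own active set `J = J_y`. Each `R_J` is convex, so its frontier is Lebesgue-null; off the
union of these finitely many frontiers `y` is interior to `R_{J_y}`, hence `θ̂` is differentiable
at `y` with derivative the orthogonal projection onto the complement of the row space of
`A_{J_y}`, whose trace is `n - rank A_{J_y}`.
-/

section DotProduct

variable {ι : Type*} [Fintype ι]

lemma sum_sub_sq_eq_dotProduct (y θ : ι → ℝ) : ∑ j, (y j - θ j) ^ 2 = (y - θ) ⬝ᵥ (y - θ) := by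
  simp only [dotProduct, Pi.sub_apply, sq]

lemma IsMinOn.dotProduct_le_zero_of_eventually_mem {C : Set (ι → ℝ)} {y p w : ι → ℝ}
    (hmin : IsMinOn (fun θ => ∑ j, (y j - θ j) ^ 2) C p)
    (hw : ∀ᶠ t in 𝓝[>] (0 : ℝ), p + t • w ∈ C) : (y - p) ⬝ᵥ w ≤ 0 := by
  have hsmall : ∀ᶠ t in 𝓝[>] (0 : ℝ), 2 * ((y - p) ⬝ᵥ w) ≤ t * (w ⬝ᵥ w) := by
    filter_upwards [hw, self_mem_nhdsWithin] with t ht (htpos : 0 < t)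
    have h := isMinOn_iff.mp hmin _ ht
    rw [sum_sub_sq_eq_dotProduct, sum_sub_sq_eq_dotProduct, sub_add_eq_sub_sub] at h
    generalize y - p = v at h ⊢
    simp only [sub_dotProduct, dotProduct_sub, smul_dotProduct, dotProduct_smul, smul_eq_mul,
      dotProduct_comm w v] at h
    have h' : t * (2 * (v ⬝ᵥ w)) ≤ t * (t * (w ⬝ᵥ w)) := by linarith
    exact le_of_mul_le_mul_left h' htpos
  have hlim : Tendsto (fun t : ℝ => t * (w ⬝ᵥ w)) (𝓝[>] 0) (𝓝 0) :=
    ((continuous_id.mul continuous_const).tendsto' 0 0 (zero_mul _)).mono_left nhdsWithin_le_nhds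
  linarith [ge_of_tendsto hlim hsmall]

lemma Convex.dotProduct_sub_le_zero_of_isMinOn {C : Set (ι → ℝ)} (hC : Convex ℝ C)
    {y p θ : ι → ℝ} (hp : p ∈ C) (hmin : IsMinOn (fun θ => ∑ j, (y j - θ j) ^ 2) C p) (hθ : θ ∈ C) :
    (y - p) ⬝ᵥ (θ - p) ≤ 0 :=
  hmin.dotProduct_le_zero_of_eventually_mem <| by
    filter_upwards [Ioo_mem_nhdsGT one_pos] with t ht
    exact hC.add_smul_sub_mem hp hθ ⟨ht.1.le, ht.2.le⟩

lemma eq_of_dotProduct_sub_le_zero {y p q : ι → ℝ} (hp : (y - p) ⬝ᵥ (q - p) ≤ 0)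
    (hq : (y - q) ⬝ᵥ (p - q) ≤ 0) : p = q := by
  have h : (p - q) ⬝ᵥ (p - q) = (y - q) ⬝ᵥ (p - q) + (y - p) ⬝ᵥ (q - p) := by
    rw [← neg_sub p q, dotProduct_neg, ← sub_eq_add_neg, ← sub_dotProduct, sub_sub_sub_cancel_left]
  have hnonneg : 0 ≤ (p - q) ⬝ᵥ (p - q) := dotProduct_self_star_nonneg (p - q)
  exact sub_eq_zero.mp (dotProduct_self_eq_zero.mp (by linarith))

lemma dotProduct_eq_zero_of_mem_span {S : Set (ι → ℝ)} {v w : ι → ℝ} (hv : v ∈ span ℝ S)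
    (hw : ∀ a ∈ S, a ⬝ᵥ w = 0) : v ⬝ᵥ w = 0 :=
  (span_le (p := LinearMap.ker ((dotProductBilin ℝ ℝ).flip w)).mpr hw) hv

end DotProduct

section OrthogonalProjection

variable {ι : Type*} [Fintype ι]

lemma inner_toLp_toLp_real (v w : ι → ℝ) : inner ℝ (toLp 2 v) (toLp 2 w) = v ⬝ᵥ w := by
  rw [EuclideanSpace.inner_toLp_toLp, star_trivial, dotProduct_comm]

noncomputable def projOrthogonal (K : Submodule ℝ (ι → ℝ)) : (ι → ℝ) →L[ℝ] (ι → ℝ) :=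
  (EuclideanSpace.equiv ι ℝ).toContinuousLinearMap ∘L
    (K.map (WithLp.linearEquiv 2 ℝ (ι → ℝ)).symm.toLinearMap)ᗮ.starProjection ∘L
      (EuclideanSpace.equiv ι ℝ).symm.toContinuousLinearMap

variable (K : Submodule ℝ (ι → ℝ))

lemma projOrthogonal_apply (v : ι → ℝ) :
    projOrthogonal K v = ofLp
      ((K.map (WithLp.linearEquiv 2 ℝ (ι → ℝ)).symm.toLinearMap)ᗮ.starProjection (toLp 2 v)) :=
  rfl

lemma dotProduct_projOrthogonal_eq_zero {a : ι → ℝ} (ha : a ∈ K) (v : ι → ℝ) :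
    a ⬝ᵥ projOrthogonal K v = 0 := by
  rw [← inner_toLp_toLp_real, projOrthogonal_apply, toLp_ofLp]
  exact inner_right_of_mem_orthogonal (mem_map_of_mem ha) (starProjection_apply_mem _ _)

lemma sub_projOrthogonal_mem (v : ι → ℝ) : v - projOrthogonal K v ∈ K := by
  have h := sub_starProjection_mem_orthogonal
    (K := (K.map (WithLp.linearEquiv 2 ℝ (ι → ℝ)).symm.toLinearMap)ᗮ) (toLp 2 v)
  rw [orthogonal_orthogonal, mem_map_equiv] at h
  simpa [projOrthogonal_apply] using h

lemma trace_projOrthogonal :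
    LinearMap.trace ℝ _ (projOrthogonal K).toLinearMap = (Fintype.card ι : ℝ) - finrank ℝ K := by
  set L := K.map (WithLp.linearEquiv 2 ℝ (ι → ℝ)).symm.toLinearMap
  have hconj : (projOrthogonal K).toLinearMap =
      (WithLp.linearEquiv 2 ℝ (ι → ℝ)).conj Lᗮ.starProjection.toLinearMap := by
    ext v; rfl
  have hproj : LinearMap.IsProj Lᗮ Lᗮ.starProjection.toLinearMap :=
    ⟨starProjection_apply_mem _, fun _ hx => starProjection_eq_self_iff.mpr hx⟩
  have hsum := L.finrank_add_finrank_orthogonal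
  rw [finrank_euclideanSpace, LinearEquiv.finrank_map_eq] at hsum
  rw [hconj, LinearMap.trace_conj', hproj.trace, ← hsum]
  push_cast
  ring

end OrthogonalProjection

section Polyhedron

variable {ι κ : Type*} [Fintype ι] (A : Matrix κ ι ℝ) (b : κ → ℝ)

def polyhedron : Set (ι → ℝ) := {θ | ∀ i, A i ⬝ᵥ θ ≤ b i}

def activeSet (θ : ι → ℝ) : Set κ := {i | A i ⬝ᵥ θ = b i}

lemma convex_polyhedron : Convex ℝ (polyhedron A b) := by
  simp only [polyhedron, Set.ofPred_forall]
  exact convex_iInter fun i => convex_halfSpace_le (dotProductBilin ℝ ℝ (A i)).isLinear (b i)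

variable {A b}

lemma eventually_add_smul_mem_polyhedron [Finite κ] {p w : ι → ℝ} (hp : p ∈ polyhedron A b)
    (hw : ∀ i ∈ activeSet A b p, A i ⬝ᵥ w ≤ 0) :
    ∀ᶠ t in 𝓝[>] (0 : ℝ), p + t • w ∈ polyhedron A b := by
  simp only [polyhedron, Set.mem_ofPred_eq, eventually_all, dotProduct_add, dotProduct_smul,
    smul_eq_mul]
  intro i
  rcases (hp i).lt_or_eq with hlt | heq
  · have hlim : Tendsto (fun t : ℝ => A i ⬝ᵥ p + t * (A i ⬝ᵥ w)) (𝓝[>] 0) (𝓝 (A i ⬝ᵥ p)) :=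
      ((by fun_prop : Continuous fun t : ℝ => A i ⬝ᵥ p + t * (A i ⬝ᵥ w)).tendsto' 0 _
        (by simp)).mono_left nhdsWithin_le_nhds
    exact (hlim.eventually_lt_const hlt).mono fun _ => le_of_lt
  · filter_upwards [self_mem_nhdsWithin] with t (ht : 0 < t)
    nlinarith [hw i heq]

lemma dotProduct_le_zero_of_feasibleDirection [Finite κ] {y p w : ι → ℝ}
    (hp : p ∈ polyhedron A b) (hmin : IsMinOn (fun θ => ∑ j, (y j - θ j) ^ 2) (polyhedron A b) p)
    (hw : ∀ i ∈ activeSet A b p, A i ⬝ᵥ w ≤ 0) : (y - p) ⬝ᵥ w ≤ 0 :=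
  hmin.dotProduct_le_zero_of_eventually_mem (eventually_add_smul_mem_polyhedron hp hw)

variable (A) in
noncomputable def faceProj (J : Set κ) (θ₀ : ι → ℝ) : (ι → ℝ) →ᵃ[ℝ] (ι → ℝ) where
  toFun y := θ₀ + projOrthogonal (span ℝ (A '' J)) (y - θ₀)
  linear := projOrthogonal (span ℝ (A '' J))
  map_vadd' p v := by
    simp only [vadd_eq_add, add_sub_assoc, ContinuousLinearMap.coe_coe, map_add]
    abel

variable (A b) in
def normalRegion (J : Set κ) (θ₀ : ι → ℝ) : Set (ι → ℝ) :=
  {y | faceProj A J θ₀ y ∈ polyhedron A b ∧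
    ∀ w, (∀ i ∈ J, A i ⬝ᵥ w ≤ 0) → (y - faceProj A J θ₀ y) ⬝ᵥ w ≤ 0}

variable {J : Set κ} {θ₀ : ι → ℝ}

lemma faceProj_apply (y : ι → ℝ) :
    faceProj A J θ₀ y = θ₀ + projOrthogonal (span ℝ (A '' J)) (y - θ₀) :=
  rfl

lemma dotProduct_faceProj {i : κ} (hi : i ∈ J) (y : ι → ℝ) :
    A i ⬝ᵥ faceProj A J θ₀ y = A i ⬝ᵥ θ₀ := by
  rw [faceProj_apply, dotProduct_add,
    dotProduct_projOrthogonal_eq_zero _ (subset_span (Set.mem_image_of_mem A hi)), add_zero]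

lemma sub_faceProj_mem_span (y : ι → ℝ) : y - faceProj A J θ₀ y ∈ span ℝ (A '' J) := by
  rw [faceProj_apply, sub_add_eq_sub_sub]
  exact sub_projOrthogonal_mem _ (y - θ₀)

lemma hasFDerivAt_faceProj (y : ι → ℝ) :
    HasFDerivAt (faceProj A J θ₀) (projOrthogonal (span ℝ (A '' J))) y := by
  have h := ((projOrthogonal (span ℝ (A '' J))).hasFDerivAt.comp y
    ((hasFDerivAt_id y).sub_const θ₀)).const_add θ₀
  rwa [ContinuousLinearMap.comp_id] at h

variable (A b J θ₀) in
lemma convex_normalRegion : Convex ℝ (normalRegion A b J θ₀) := by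
  intro y₁ h₁ y₂ h₂ s t hs ht hst
  have hcombo := Convex.combo_affine_apply (f := faceProj A J θ₀) (x := y₁) (y := y₂) hst
  refine ⟨hcombo ▸ convex_polyhedron A b h₁.1 h₂.1 hs ht hst, fun w hw => ?_⟩
  have hres : s • y₁ + t • y₂ - faceProj A J θ₀ (s • y₁ + t • y₂) =
      s • (y₁ - faceProj A J θ₀ y₁) + t • (y₂ - faceProj A J θ₀ y₂) := by
    rw [hcombo, smul_sub, smul_sub]; abel
  rw [hres, add_dotProduct, smul_dotProduct, smul_dotProduct, smul_eq_mul, smul_eq_mul]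
  exact add_nonpos (mul_nonpos_of_nonneg_of_nonpos hs (h₁.2 w hw))
    (mul_nonpos_of_nonneg_of_nonpos ht (h₂.2 w hw))

lemma eq_faceProj_of_mem_normalRegion (hθ₀ : ∀ i ∈ J, A i ⬝ᵥ θ₀ = b i) {y p : ι → ℝ}
    (hp : p ∈ polyhedron A b)
    (hmin : IsMinOn (fun θ => ∑ j, (y j - θ j) ^ 2) (polyhedron A b) p)
    (hy : y ∈ normalRegion A b J θ₀) : p = faceProj A J θ₀ y := by
  refine eq_of_dotProduct_sub_le_zero
    ((convex_polyhedron A b).dotProduct_sub_le_zero_of_isMinOn hp hmin hy.1)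
    (hy.2 _ fun i hi => ?_)
  rw [dotProduct_sub, dotProduct_faceProj hi, hθ₀ i hi]
  exact sub_nonpos.mpr (hp i)

lemma mem_normalRegion_activeSet [Finite κ] {y p : ι → ℝ} (hp : p ∈ polyhedron A b)
    (hmin : IsMinOn (fun θ => ∑ j, (y j - θ j) ^ 2) (polyhedron A b) p)
    (hθ₀ : ∀ i ∈ activeSet A b p, A i ⬝ᵥ θ₀ = b i) :
    y ∈ normalRegion A b (activeSet A b p) θ₀ := by
  have hflat : ∀ i ∈ activeSet A b p, A i ⬝ᵥ (p - faceProj A (activeSet A b p) θ₀ y) = 0 :=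
    fun i hi => by rw [dotProduct_sub, dotProduct_faceProj hi, hθ₀ i hi, hi, sub_self]
  have hpq : p = faceProj A (activeSet A b p) θ₀ y := by
    refine eq_of_dotProduct_sub_le_zero (dotProduct_le_zero_of_feasibleDirection hp hmin
      fun i hi => ?_) (dotProduct_eq_zero_of_mem_span (sub_faceProj_mem_span y) ?_).le
    · rw [← neg_sub, dotProduct_neg, hflat i hi, neg_zero]
    · rintro _ ⟨i, hi, rfl⟩
      exact hflat i hi
  refine ⟨?_, fun w hw => ?_⟩ <;> rw [← hpq]
  · exact hp
  · exact dotProduct_le_zero_of_feasibleDirection hp hmin hw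

end Polyhedron

lemma rank_submatrix_subtype {κ ι R : Type*} [Finite κ] [Fintype ι] [Field R]
    (A : Matrix κ ι R) (P : κ → Prop) :
    (A.submatrix (fun i : {i // P i} => (i : κ)) id).rank =
      finrank R (span R (A '' {i | P i})) := by
  rw [rank_eq_finrank_span_row]
  exact congrArg (fun S => finrank R (span R S)) (Set.image_eq_range A _).symm

lemma divg_eq_trace {n : ℕ} {f : (Fin n → ℝ) → (Fin n → ℝ)}
    {f' : (Fin n → ℝ) →L[ℝ] (Fin n → ℝ)} {y : Fin n → ℝ} (hf : HasFDerivAt f f' y) :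
    divg f y = LinearMap.trace ℝ _ f'.toLinearMap := by
  rw [divg, hf.fderiv, LinearMap.trace_eq_matrix_trace ℝ (Pi.basisFun ℝ (Fin n)), Matrix.trace]
  simp only [LinearMap.toMatrix_eq_toMatrix', diag_apply, LinearMap.toMatrix'_apply,
    ContinuousLinearMap.coe_coe]

theorem divergence_projection_polyhedron_general {m n : ℕ}
    (A : Matrix (Fin m) (Fin n) ℝ) (b : Fin m → ℝ)
    (C : Set (Fin n → ℝ)) (hC : C = {θ | ∀ i, A i ⬝ᵥ θ ≤ b i})
    (θhat : (Fin n → ℝ) → (Fin n → ℝ))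
    (hproj : ∀ y, θhat y ∈ C ∧ ∀ θ ∈ C, ∑ j, (y j - θhat y j) ^ 2 ≤ ∑ j, (y j - θ j) ^ 2) :
    ∀ᵐ y ∂(volume : Measure (Fin n → ℝ)), DifferentiableAt ℝ θhat y ∧
      divg θhat y = (n : ℝ) -
        (Matrix.rank (A.submatrix
          (fun i : {i : Fin m // A i ⬝ᵥ θhat y = b i} => (i : Fin m)) id) : ℝ) := by
  subst hC
  have hmin : ∀ y, IsMinOn (fun θ => ∑ j, (y j - θ j) ^ 2) (polyhedron A b) (θhat y) :=
    fun y => isMinOn_iff.mpr (hproj y).2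
  -- a base point of the affine hull of each face; junk for empty faces, which are never active
  set θ₀ : Set (Fin m) → Fin n → ℝ :=
    fun J => Classical.epsilon fun θ => ∀ i ∈ J, A i ⬝ᵥ θ = b i
  have hnull : volume (⋃ J, frontier (normalRegion A b J (θ₀ J))) = 0 :=
    measure_iUnion_null fun J => (convex_normalRegion A b J _).addHaar_frontier volume
  filter_upwards [compl_mem_ae_iff.mpr hnull] with y hy
  set J := activeSet A b (θhat y)
  have hθ₀ : ∀ i ∈ J, A i ⬝ᵥ θ₀ J = b i :=
    Classical.epsilon_spec (p := fun θ => ∀ i ∈ J, A i ⬝ᵥ θ = b i) ⟨θhat y, fun i hi => hi⟩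
  have hint : y ∈ interior (normalRegion A b J (θ₀ J)) := by
    by_contra hnot
    exact hy (Set.mem_iUnion.mpr ⟨J,
      subset_closure (mem_normalRegion_activeSet (hproj y).1 (hmin y) hθ₀), hnot⟩)
  have hderiv : HasFDerivAt θhat (projOrthogonal (span ℝ (A '' J))) y :=
    hasFDerivAt_faceProj y |>.congr_of_eventuallyEq <|
      eventually_of_mem (isOpen_interior.mem_nhds hint) fun y' hy' =>
        eq_faceProj_of_mem_normalRegion hθ₀ (hproj y').1 (hmin y') (interior_subset hy')
  refine ⟨hderiv.differentiableAt, ?_⟩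
  rw [divg_eq_trace hderiv, trace_projOrthogonal, Fintype.card_fin,
    rank_submatrix_subtype A fun i => A i ⬝ᵥ θhat y = b i]
  rfl

/-- For the metric projection `θ̂` onto a nonempty polyhedron
`C = {θ : Aθ ≤ b}`, for almost every `y` the map `θ̂` is differentiable at `y` and its
divergence equals `n - rank(A_{J_y})`, where `J_y` is the set of binding constraints at
`θ̂(y)`. -/
theorem divergence_projection_polyhedron {m n : ℕ}
    (A : Matrix (Fin m) (Fin n) ℝ) (b : Fin m → ℝ)
    (C : Set (Fin n → ℝ)) (hC : C = {θ | ∀ i, A i ⬝ᵥ θ ≤ b i}) (hCne : C.Nonempty)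
    (θhat : (Fin n → ℝ) → (Fin n → ℝ))
    (hproj : ∀ y, θhat y ∈ C ∧ ∀ θ ∈ C, ∑ j, (y j - θhat y j) ^ 2 ≤ ∑ j, (y j - θ j) ^ 2) :
    ∀ᵐ y ∂(volume : Measure (Fin n → ℝ)), DifferentiableAt ℝ θhat y ∧
      divg θhat y = (n : ℝ) -
        (Matrix.rank (A.submatrix
          (fun i : {i : Fin m // A i ⬝ᵥ θhat y = b i} => (i : Fin m)) id) : ℝ) :=
  divergence_projection_polyhedron_general A b C hC θhat hproj
end

section
/- Let G̃ = (V, Ẽ) be an acyclic directed graph on V = {1,…,n} encoding a partial order (edges (i,j) ∈ Ẽ meaning the constraint θ_i ≤ θ_j), let max(V) be the set of nodes with no outgoing edge in Ẽ, min(V) the set of nodes with no incoming edge, and for λ ≥ 0 let C = {θ ∈ ℝⁿ : θ_i ≤ θ_j for all (i,j) ∈ Ẽ; θ_i ≤ θ_j + λ for all i ∈ max(V), j ∈ min(V)}, written as C = {θ : Aθ ≤ b} where A is the incidence matrix of the augmented directed graph G = (V, E) with E = Ẽ ∪ {(i,j) : i ∈ max(V), j ∈ min(V)}. Let θ̂_λ(y)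 = P_C(y), J_y the set of binding constraints at θ̂_λ(y), and G_{J_y} the subgraph of G consisting of the edges indexed by J_y (together with all n vertices). Then for Lebesgue-almost every y ∈ ℝⁿ, θ̂_λ is differentiable at y and its divergence equals the number of connected components of the undirected version of G_{J_y}: D(y) = ω(G_{J_y}). -/
open Matrix MeasureTheory

namespace DivIso

open Finset SimpleGraph

attribute [local instance] Classical.propDecidable

variable {n : ℕ}

/-! ### Inner product -/

noncomputable def ip (x y : Fin n → ℝ) : ℝ := ∑ j, x j * y j

lemma ip_comm (x y : Fin n → ℝ) : ip x y = ip y x :=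
  Finset.sum_congr rfl fun j _ => mul_comm _ _

lemma ip_add_right (x y z : Fin n → ℝ) : ip x (y + z) = ip x y + ip x z := by
  unfold ip; rw [← Finset.sum_add_distrib]
  exact Finset.sum_congr rfl fun j _ => by simp [Pi.add_apply]; ring

lemma ip_sub_right (x y z : Fin n → ℝ) : ip x (y - z) = ip x y - ip x z := by
  unfold ip; rw [← Finset.sum_sub_distrib]
  exact Finset.sum_congr rfl fun j _ => by simp [Pi.sub_apply]; ring

lemma ip_smul_right (x : Fin n → ℝ) (c : ℝ) (y : Fin n → ℝ) :
    ip x (c • y) = c * ip x y := by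
  unfold ip; rw [Finset.mul_sum]
  exact Finset.sum_congr rfl fun j _ => by simp [Pi.smul_apply]; ring

lemma ip_add_left (x y z : Fin n → ℝ) : ip (x + y) z = ip x z + ip y z := by
  rw [ip_comm, ip_add_right, ip_comm x z, ip_comm y z]

lemma ip_sub_left (x y z : Fin n → ℝ) : ip (x - y) z = ip x z - ip y z := by
  rw [ip_comm, ip_sub_right, ip_comm z x, ip_comm z y]

lemma ip_smul_left (c : ℝ) (x y : Fin n → ℝ) : ip (c • x) y = c * ip x y := by
  rw [ip_comm, ip_smul_right, ip_comm]

lemma ip_self_nonneg (x : Fin n → ℝ) : 0 ≤ ip x x :=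
  Finset.sum_nonneg fun j _ => mul_self_nonneg _

lemma eq_zero_of_ip_self {x : Fin n → ℝ} (h : ip x x = 0) : x = 0 := by
  funext j
  have h2 : ∀ i ∈ Finset.univ, 0 ≤ x i * x i := fun i _ => mul_self_nonneg _
  have := (Finset.sum_eq_zero_iff_of_nonneg h2).1 h j (Finset.mem_univ j)
  exact mul_self_eq_zero.1 this

/-! ### Averaging over connected components -/

noncomputable def fib (G : SimpleGraph (Fin n)) (i : Fin n) : Finset (Fin n) :=
  Finset.univ.filter fun j => G.connectedComponentMk j = G.connectedComponentMk i

lemma mem_fib {G : SimpleGraph (Fin n)} {i j : Fin n} :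
    j ∈ fib G i ↔ G.connectedComponentMk j = G.connectedComponentMk i := by
  simp [fib]

lemma self_mem_fib {G : SimpleGraph (Fin n)} (i : Fin n) : i ∈ fib G i :=
  mem_fib.2 rfl

lemma fib_card_pos (G : SimpleGraph (Fin n)) (i : Fin n) : 0 < (fib G i).card :=
  Finset.card_pos.2 ⟨i, self_mem_fib i⟩

lemma fib_congr {G : SimpleGraph (Fin n)} {u v : Fin n}
    (h : G.connectedComponentMk u = G.connectedComponentMk v) : fib G u = fib G v := by
  ext j; simp [mem_fib, h]

noncomputable def avg (G : SimpleGraph (Fin n)) (x : Fin n → ℝ) : Fin n → ℝ :=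
  fun i => (∑ j ∈ fib G i, x j) / (fib G i).card

def compConst (G : SimpleGraph (Fin n)) (x : Fin n → ℝ) : Prop :=
  ∀ u v, G.connectedComponentMk u = G.connectedComponentMk v → x u = x v

lemma compConst_avg (G : SimpleGraph (Fin n)) (x : Fin n → ℝ) : compConst G (avg G x) := by
  intro u v h; unfold avg; rw [fib_congr h]

lemma compConst_of_adj {G : SimpleGraph (Fin n)} {x : Fin n → ℝ}
    (h : ∀ u v, G.Adj u v → x u = x v) : compConst G x := by
  have key : ∀ u v, (p : G.Walk u v) → x u = x v := by
    intro u v p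
    induction p with
    | nil => rfl
    | cons ha _ ih => exact (h _ _ ha).trans ih
  intro u v huv
  obtain ⟨p⟩ := (SimpleGraph.ConnectedComponent.eq).1 huv
  exact key _ _ p

lemma avg_add (G : SimpleGraph (Fin n)) (x y : Fin n → ℝ) :
    avg G (x + y) = avg G x + avg G y := by
  funext i; unfold avg
  simp only [Pi.add_apply, Finset.sum_add_distrib]
  rw [add_div]

lemma avg_smul (G : SimpleGraph (Fin n)) (c : ℝ) (x : Fin n → ℝ) :
    avg G (c • x) = c • avg G x := by
  funext i; unfold avg
  simp only [Pi.smul_apply, smul_eq_mul, ← Finset.mul_sum]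
  rw [mul_div_assoc]

lemma ip_avg (G : SimpleGraph (Fin n)) (x : Fin n → ℝ) {w : Fin n → ℝ}
    (hw : compConst G w) : ip (avg G x) w = ip x w := by
  unfold ip avg
  have step1 : ∀ i : Fin n,
      (∑ j ∈ fib G i, x j) / (fib G i).card * w i
        = ∑ j ∈ fib G i, x j * w i / (fib G i).card := by
    intro i
    rw [Finset.sum_div, Finset.sum_mul]
    exact Finset.sum_congr rfl fun j _ => by ring
  calc (∑ i, (∑ j ∈ fib G i, x j) / ((fib G i).card : ℝ) * w i)
      = ∑ i, ∑ j ∈ fib G i, x j * w i / (fib G i).card :=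
        Finset.sum_congr rfl fun i _ => step1 i
    _ = ∑ j, ∑ i ∈ fib G j, x j * w i / (fib G i).card := by
        refine Finset.sum_comm' fun i j => ?_
        simp only [Finset.mem_univ, true_and, and_true, mem_fib]
        exact ⟨fun h => h.symm, fun h => h.symm⟩
    _ = ∑ j, x j * w j := by
        refine Finset.sum_congr rfl fun j _ => ?_
        have : ∀ i ∈ fib G j, x j * w i / ((fib G i).card : ℝ)
            = x j * w j / (fib G j).card := by
          intro i hi
          rw [hw i j (mem_fib.1 hi), fib_congr (mem_fib.1 hi)]
        rw [Finset.sum_congr rfl this, Finset.sum_const, nsmul_eq_mul]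
        have hc : ((fib G j).card : ℝ) ≠ 0 := by
          exact_mod_cast (fib_card_pos G j).ne'
        field_simp

lemma sum_avg_single (G : SimpleGraph (Fin n)) :
    ∑ i, avg G (Pi.single i 1) i = (Nat.card G.ConnectedComponent : ℝ) := by
  have h1 : ∀ i : Fin n, avg G (Pi.single i 1) i = 1 / ((fib G i).card : ℝ) := by
    intro i
    unfold avg
    congr 1
    rw [Finset.sum_eq_single_of_mem i (self_mem_fib i)
      (fun j _ hne => Pi.single_eq_of_ne hne 1)]
    exact Pi.single_eq_same i 1
  rw [Finset.sum_congr rfl fun i _ => h1 i]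
  rw [Nat.card_eq_fintype_card]
  rw [← Finset.sum_fiberwise_of_maps_to
    (g := fun i => G.connectedComponentMk i) (t := Finset.univ)
    (fun i _ => Finset.mem_univ _) (fun i => 1 / ((fib G i).card : ℝ))]
  have inner : ∀ c : G.ConnectedComponent,
      (∑ i ∈ Finset.univ.filter fun i => G.connectedComponentMk i = c,
        1 / ((fib G i).card : ℝ)) = 1 := by
    intro c
    obtain ⟨v, rfl⟩ := c.exists_rep
    show (∑ i ∈ Finset.univ.filter
        fun i => G.connectedComponentMk i = G.connectedComponentMk v,
        1 / ((fib G i).card : ℝ)) = 1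
    have hfib : ∀ i ∈ Finset.univ.filter
        (fun i => G.connectedComponentMk i = G.connectedComponentMk v),
        fib G i = fib G v := by
      intro i hi
      exact fib_congr (by simpa using (Finset.mem_filter.1 hi).2)
    have heq : (Finset.univ.filter
        fun i => G.connectedComponentMk i = G.connectedComponentMk v) = fib G v := by
      ext j; simp [mem_fib, fib]
    rw [Finset.sum_congr rfl fun i hi => by rw [hfib i hi]]
    rw [heq, Finset.sum_const, nsmul_eq_mul]
    have hc : ((fib G v).card : ℝ) ≠ 0 := by exact_mod_cast (fib_card_pos G v).ne'
    field_simp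
  rw [Finset.sum_congr rfl fun c _ => inner c]
  simp

/-! ### The polyhedron and the projection -/

variable (Et : Fin n → Fin n → Prop) (lam : ℝ) (maxV minV : Set (Fin n))
variable (C : Set (Fin n → ℝ)) (θh : (Fin n → ℝ) → Fin n → ℝ)

def bindP (y : Fin n → ℝ) (p : Fin n × Fin n) : Prop :=
  (Et p.1 p.2 ∧ θh y p.1 = θh y p.2) ∨
  (p.1 ∈ maxV ∧ p.2 ∈ minV ∧ θh y p.1 = θh y p.2 + lam)

noncomputable def Jset (y : Fin n → ℝ) : Finset (Fin n × Fin n) :=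
  Finset.univ.filter (bindP Et lam maxV minV θh y)

lemma mem_Jset {y : Fin n → ℝ} {p : Fin n × Fin n} :
    p ∈ Jset Et lam maxV minV θh y ↔ bindP Et lam maxV minV θh y p := by
  simp [Jset]

def GJ (J : Finset (Fin n × Fin n)) : SimpleGraph (Fin n) :=
  SimpleGraph.fromRel fun u v => (u, v) ∈ J

def constJ (J : Finset (Fin n × Fin n)) (x : Fin n → ℝ) : Prop :=
  ∀ p ∈ J, x p.1 = x p.2

lemma constJ_iff {J : Finset (Fin n × Fin n)} {x : Fin n → ℝ} :
    constJ J x ↔ compConst (GJ J) x := by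
  constructor
  · intro h
    apply compConst_of_adj
    intro u v huv
    rw [GJ, SimpleGraph.fromRel_adj] at huv
    rcases huv.2 with h1 | h1
    · exact h (u, v) h1
    · exact (h (v, u) h1).symm
  · intro h p hp
    by_cases hpp : p.1 = p.2
    · rw [hpp]
    · refine h p.1 p.2 (SimpleGraph.ConnectedComponent.connectedComponentMk_eq_of_adj ?_)
      rw [GJ, SimpleGraph.fromRel_adj]
      exact ⟨hpp, Or.inl (by simpa using hp)⟩

lemma constJ_sub {J : Finset (Fin n × Fin n)} {x y : Fin n → ℝ}
    (hx : constJ J x) (hy : constJ J y) : constJ J (x - y) := by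
  intro p hp; simp [Pi.sub_apply, hx p hp, hy p hp]

def KJ (J : Finset (Fin n × Fin n)) : Set (Fin n → ℝ) :=
  {y | Jset Et lam maxV minV θh y = J ∧
    ∀ x, constJ J x → ip (y - θh y) x = 0}

section Proj

variable (hC : C = {θ | (∀ i j, Et i j → θ i ≤ θ j) ∧
      ∀ i ∈ maxV, ∀ j ∈ minV, θ i ≤ θ j + lam})
variable (hproj : ∀ y, θh y ∈ C ∧ ∀ θ ∈ C, ∑ j, (y j - θh y j) ^ 2 ≤ ∑ j, (y j - θ j) ^ 2)

include hC in
lemma memC {θ : Fin n → ℝ} : θ ∈ C ↔ ((∀ i j, Et i j → θ i ≤ θ j) ∧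
    ∀ i ∈ maxV, ∀ j ∈ minV, θ i ≤ θ j + lam) := by
  rw [hC]; rfl

include hC in
lemma convexC : Convex ℝ C := by
  rw [hC]
  intro x hx y hy a b ha hb hab
  constructor
  · intro i j hij
    have h1 := mul_le_mul_of_nonneg_left (hx.1 i j hij) ha
    have h2 := mul_le_mul_of_nonneg_left (hy.1 i j hij) hb
    simp only [Pi.add_apply, Pi.smul_apply, smul_eq_mul]
    linarith
  · intro i hi j hj
    have h1 := mul_le_mul_of_nonneg_left (hx.2 i hi j hj) ha
    have h2 := mul_le_mul_of_nonneg_left (hy.2 i hi j hj) hb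
    have hl : a * lam + b * lam = lam := by rw [← add_mul, hab, one_mul]
    simp only [Pi.add_apply, Pi.smul_apply, smul_eq_mul]
    nlinarith

include hC hproj in
lemma vi (y : Fin n → ℝ) : ∀ z ∈ C, ip (y - θh y) (z - θh y) ≤ 0 := by
  intro z hz
  set θ := θh y with hθdef
  have hθC : θ ∈ C := (hproj y).1
  set v := z - θ with hvdef
  set s := ip (y - θ) v with hsdef
  set q := ip v v with hqdef
  have key : ∀ t : ℝ, 0 < t → t ≤ 1 → 2 * t * s ≤ t ^ 2 * q := by
    intro t ht0 ht1
    have hzt : θ + t • v ∈ C := by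
      have hmem := convexC (n := n) Et lam maxV minV C hC hz hθC ht0.le
        (by linarith : (0:ℝ) ≤ 1 - t) (by ring)
      have : θ + t • v = t • z + (1 - t) • θ := by
        funext i; simp [hvdef, Pi.add_apply, Pi.smul_apply, Pi.sub_apply]; ring
      rw [this]; exact hmem
    have hm := (hproj y).2 _ hzt
    have expand : ∑ j, (y j - (θ + t • v) j) ^ 2
        = (∑ j, (y j - θ j) ^ 2) - 2 * t * s + t ^ 2 * q := by
      simp only [hsdef, hqdef, ip, Pi.add_apply, Pi.smul_apply, Pi.sub_apply,
        smul_eq_mul, Finset.mul_sum]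
      rw [← Finset.sum_sub_distrib, ← Finset.sum_add_distrib]
      exact Finset.sum_congr rfl fun j _ => by ring
    rw [expand] at hm
    linarith
  by_contra hcon
  push_neg at hcon
  have hq0 : 0 ≤ q := ip_self_nonneg v
  rcases hq0.eq_or_lt with hq | hq
  · have := key 1 one_pos le_rfl
    nlinarith
  · set t := min 1 (s / q) with htdef
    have ht0 : 0 < t := lt_min one_pos (div_pos hcon hq)
    have ht1 : t ≤ 1 := min_le_left _ _
    have hts : t ≤ s / q := min_le_right _ _
    have h2 := key t ht0 ht1
    have htq : t * q ≤ s := by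
      have := mul_le_mul_of_nonneg_right hts hq.le
      rwa [div_mul_cancel₀ s hq.ne'] at this
    have hsq : t ^ 2 * q ≤ t * s := by
      calc t ^ 2 * q = t * (t * q) := by ring
        _ ≤ t * s := mul_le_mul_of_nonneg_left htq ht0.le
    nlinarith

include hC hproj in
lemma proj_eq (y θ : Fin n → ℝ) (hθ : θ ∈ C)
    (hvi : ∀ z ∈ C, ip (y - θ) (z - θ) ≤ 0) : θh y = θ := by
  have hA := vi Et lam maxV minV C θh hC hproj y θ hθ
  have hB := hvi (θh y) (hproj y).1
  have hkey : ip (θh y - θ) (θh y - θ) ≤ 0 := by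
    have hid : θh y - θ = (y - θ) - (y - θh y) := by funext i; simp
    calc ip (θh y - θ) (θh y - θ)
        = ip (y - θ) (θh y - θ) - ip (y - θh y) (θh y - θ) := by
          rw [hid, ip_sub_left]
      _ ≤ 0 := by
          have : ip (y - θh y) (θh y - θ) = - ip (y - θh y) (θ - θh y) := by
            have : θh y - θ = (0:Fin n → ℝ) - (θ - θh y) := by funext i; simp
            rw [this, ip_sub_right]
            simp [ip]
          rw [this]
          have h1 := hB
          have h2 := hA
          linarith
  have := le_antisymm hkey (ip_self_nonneg _)
  have := eq_zero_of_ip_self this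
  have := sub_eq_zero.1 this
  exact this

end Proj

noncomputable def dd (p : Fin n × Fin n) : ℝ := if Et p.1 p.2 then 0 else lam

lemma bind_dd (hmaxV : maxV = {i | ∀ j, ¬ Et i j}) {y : Fin n → ℝ} {p : Fin n × Fin n}
    (h : bindP Et lam maxV minV θh y p) : θh y p.1 = θh y p.2 + dd Et lam p := by
  rcases h with ⟨hEt, he⟩ | ⟨hmax, hmin, he⟩
  · simp only [dd, if_pos hEt, add_zero]; exact he
  · have hnEt : ¬ Et p.1 p.2 := by rw [hmaxV] at hmax; exact hmax p.2
    simp only [dd, if_neg hnEt]; exact he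

lemma bindP_eq_of_Et (hmaxV : maxV = {i | ∀ j, ¬ Et i j}) {y : Fin n → ℝ}
    {p : Fin n × Fin n} (hEt : Et p.1 p.2)
    (h : bindP Et lam maxV minV θh y p) : θh y p.1 = θh y p.2 := by
  rcases h with ⟨_, he⟩ | ⟨hmax, _, _⟩
  · exact he
  · rw [hmaxV] at hmax; exact absurd hEt (hmax p.2)

lemma constJ_diff (hmaxV : maxV = {i | ∀ j, ¬ Et i j}) {J : Finset (Fin n × Fin n)}
    {y1 y2 : Fin n → ℝ}
    (h1 : ∀ p ∈ J, bindP Et lam maxV minV θh y1 p)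
    (h2 : ∀ p ∈ J, bindP Et lam maxV minV θh y2 p) :
    constJ J (θh y1 - θh y2) := by
  intro p hp
  have e1 := bind_dd Et lam maxV minV θh hmaxV (h1 p hp)
  have e2 := bind_dd Et lam maxV minV θh hmaxV (h2 p hp)
  simp only [Pi.sub_apply]
  linarith

section Proj2

variable (hC : C = {θ | (∀ i j, Et i j → θ i ≤ θ j) ∧
      ∀ i ∈ maxV, ∀ j ∈ minV, θ i ≤ θ j + lam})
variable (hproj : ∀ y, θh y ∈ C ∧ ∀ θ ∈ C, ∑ j, (y j - θh y j) ^ 2 ≤ ∑ j, (y j - θ j) ^ 2)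
variable (hmaxV : maxV = {i | ∀ j, ¬ Et i j})

include hC hproj hmaxV in
lemma covering (y : Fin n → ℝ) :
    y ∈ KJ Et lam maxV minV θh (Jset Et lam maxV minV θh y) := by
  refine ⟨rfl, ?_⟩
  intro x hx
  have hbx : ∀ p : Fin n × Fin n, bindP Et lam maxV minV θh y p → x p.1 = x p.2 :=
    fun p hp => hx p (mem_Jset Et lam maxV minV θh |>.2 hp)
  have hθC := (hproj y).1
  rw [memC Et lam maxV minV C hC] at hθC
  obtain ⟨hA, hB⟩ := hθC
  set θ := θh y with hθdef
  set h : Fin n × Fin n → ℝ := fun p =>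
    if θ p.1 < θ p.2 + dd Et lam p
    then (θ p.2 + dd Et lam p - θ p.1) / (|x p.1 - x p.2| + 1)
    else 1 with hhdef
  set S : Finset ℝ := insert 1 (Finset.univ.image h) with hSdef
  have hSne : S.Nonempty := Finset.insert_nonempty _ _
  set ε := S.min' hSne with hεdef
  have hpos : ∀ a ∈ S, 0 < a := by
    intro a ha
    rw [hSdef, Finset.mem_insert] at ha
    rcases ha with rfl | ha
    · exact one_pos
    · obtain ⟨p, -, rfl⟩ := Finset.mem_image.1 ha
      rw [hhdef]
      dsimp only
      split_ifs with hcond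
      · exact div_pos (by linarith) (by positivity)
      · exact one_pos
  have hε_pos : 0 < ε := hpos _ (S.min'_mem hSne)
  have hε_le : ∀ p : Fin n × Fin n, ε ≤ h p := fun p =>
    Finset.min'_le _ _ (Finset.mem_insert_of_mem (Finset.mem_image_of_mem h (Finset.mem_univ p)))
  have key : ∀ s : ℝ, |s| ≤ ε → θ + s • x ∈ C := by
    intro s hs
    have main : ∀ p : Fin n × Fin n, (Et p.1 p.2 ∨ (p.1 ∈ maxV ∧ p.2 ∈ minV)) →
        θ p.1 + s * x p.1 ≤ θ p.2 + dd Et lam p + s * x p.2 := by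
      intro p hp
      by_cases hb : bindP Et lam maxV minV θh y p
      · have hxp := hbx p hb
        have hdd := bind_dd Et lam maxV minV θh hmaxV hb
        rw [← hθdef] at hdd
        rw [hxp]
        linarith
      · have hstrict : θ p.1 < θ p.2 + dd Et lam p := by
          rcases hp with hEt | ⟨h1, h2⟩
          · have hne : θ p.1 ≠ θ p.2 := fun he => hb (Or.inl ⟨hEt, he⟩)
            have hle := hA p.1 p.2 hEt
            simp only [dd, if_pos hEt, add_zero]
            exact lt_of_le_of_ne hle hne
          · have hnEt : ¬ Et p.1 p.2 := by rw [hmaxV] at h1; exact h1 p.2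
            have hne : θ p.1 ≠ θ p.2 + lam := fun he => hb (Or.inr ⟨h1, h2, he⟩)
            simp only [dd, if_neg hnEt]
            exact lt_of_le_of_ne (hB p.1 h1 p.2 h2) hne
        have hhp : h p = (θ p.2 + dd Et lam p - θ p.1) / (|x p.1 - x p.2| + 1) := by
          rw [hhdef]; dsimp only; rw [if_pos hstrict]
        have hle := hε_le p
        rw [hhp] at hle
        have hd1 : (0:ℝ) < |x p.1 - x p.2| + 1 := by positivity
        have h3 : ε * (|x p.1 - x p.2| + 1) ≤ θ p.2 + dd Et lam p - θ p.1 := by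
          have := mul_le_mul_of_nonneg_right hle hd1.le
          rwa [div_mul_cancel₀ _ hd1.ne'] at this
        have habs : s * (x p.1 - x p.2) ≤ |s| * |x p.1 - x p.2| := by
          calc s * (x p.1 - x p.2) ≤ |s * (x p.1 - x p.2)| := le_abs_self _
            _ = |s| * |x p.1 - x p.2| := abs_mul _ _
        have h4 : |s| * |x p.1 - x p.2| ≤ ε * (|x p.1 - x p.2| + 1) :=
          mul_le_mul hs (by linarith [abs_nonneg (x p.1 - x p.2)]) (abs_nonneg _) hε_pos.le
        linarith
    rw [memC Et lam maxV minV C hC]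
    constructor
    · intro i j hij
      have hm := main (i, j) (Or.inl hij)
      have hdd : dd Et lam (i, j) = 0 := if_pos hij
      rw [hdd] at hm
      simp only [Pi.add_apply, Pi.smul_apply, smul_eq_mul]
      linarith
    · intro i hi j hj
      have hm := main (i, j) (Or.inr ⟨hi, hj⟩)
      have hnEt : ¬ Et i j := by rw [hmaxV] at hi; exact hi j
      have hdd : dd Et lam (i, j) = lam := if_neg hnEt
      rw [hdd] at hm
      simp only [Pi.add_apply, Pi.smul_apply, smul_eq_mul]
      linarith
  have hp1 : θ + ε • x ∈ C := key ε (by rw [abs_of_pos hε_pos])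
  have hp2 : θ + (-ε) • x ∈ C := key (-ε) (by rw [abs_neg, abs_of_pos hε_pos])
  have v1 := vi Et lam maxV minV C θh hC hproj y _ hp1
  have v2 := vi Et lam maxV minV C θh hC hproj y _ hp2
  rw [← hθdef, add_sub_cancel_left, ip_smul_right] at v1 v2
  have h5 : ip (y - θ) x ≤ 0 := by
    by_contra hh
    push_neg at hh
    nlinarith
  have h6 : 0 ≤ ip (y - θ) x := by
    by_contra hh
    push_neg at hh
    nlinarith
  linarith

include hC hproj hmaxV in
lemma KJ_convex (J : Finset (Fin n × Fin n)) :
    Convex ℝ (KJ Et lam maxV minV θh J) := by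
  intro y1 hy1 y2 hy2 a b ha hb hab
  obtain ⟨hJ1, ho1⟩ := hy1
  obtain ⟨hJ2, ho2⟩ := hy2
  have hbp1 : ∀ p ∈ J, bindP Et lam maxV minV θh y1 p := fun p hp =>
    (mem_Jset Et lam maxV minV θh).1 (by rw [hJ1]; exact hp)
  have hbp2 : ∀ p ∈ J, bindP Et lam maxV minV θh y2 p := fun p hp =>
    (mem_Jset Et lam maxV minV θh).1 (by rw [hJ2]; exact hp)
  have hnb1 : ∀ p, p ∉ J → ¬ bindP Et lam maxV minV θh y1 p := fun p hp hb' =>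
    hp (by rw [← hJ1]; exact (mem_Jset Et lam maxV minV θh).2 hb')
  have hnb2 : ∀ p, p ∉ J → ¬ bindP Et lam maxV minV θh y2 p := fun p hp hb' =>
    hp (by rw [← hJ2]; exact (mem_Jset Et lam maxV minV θh).2 hb')
  set θ1 := θh y1 with hθ1def
  set θ2 := θh y2 with hθ2def
  set θt := a • θ1 + b • θ2 with hθt
  set yt := a • y1 + b • y2 with hyt
  have hdiff : constJ J (θ1 - θ2) := constJ_diff Et lam maxV minV θh hmaxV hbp1 hbp2
  have hdiff' : constJ J (θ2 - θ1) := by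
    intro p hp
    have := hdiff p hp
    simp only [Pi.sub_apply] at this ⊢
    linarith
  have hθ1C : θ1 ∈ C := (hproj y1).1
  have hθ2C : θ2 ∈ C := (hproj y2).1
  have hθtC : θt ∈ C := convexC Et lam maxV minV C hC hθ1C hθ2C ha hb hab
  have hvdec : yt - θt = a • (y1 - θ1) + b • (y2 - θ2) := by
    funext i
    simp only [hyt, hθt, Pi.sub_apply, Pi.add_apply, Pi.smul_apply, smul_eq_mul]
    ring
  have hθ1t : θ1 - θt = b • (θ1 - θ2) := by
    funext i
    simp only [hθt, Pi.sub_apply, Pi.add_apply, Pi.smul_apply, smul_eq_mul]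
    have hb' : a = 1 - b := by linarith
    rw [hb']; ring
  have hθ2t : θ2 - θt = a • (θ2 - θ1) := by
    funext i
    simp only [hθt, Pi.sub_apply, Pi.add_apply, Pi.smul_apply, smul_eq_mul]
    have ha' : b = 1 - a := by linarith
    rw [ha']; ring
  have hl : a * lam + b * lam = lam := by rw [← add_mul, hab, one_mul]
  have hprojt : θh yt = θt := by
    apply proj_eq Et lam maxV minV C θh hC hproj yt θt hθtC
    intro z hz
    have hz1 := vi Et lam maxV minV C θh hC hproj y1 z hz
    have hz2 := vi Et lam maxV minV C θh hC hproj y2 z hz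
    rw [← hθ1def] at hz1
    rw [← hθ2def] at hz2
    have e1 : ip (y1 - θ1) (z - θt) ≤ 0 := by
      have hzz : z - θt = (z - θ1) + (θ1 - θt) := by
        funext i; simp only [Pi.sub_apply, Pi.add_apply]; ring
      rw [hzz, ip_add_right, hθ1t, ip_smul_right, ho1 _ hdiff, mul_zero, add_zero]
      exact hz1
    have e2 : ip (y2 - θ2) (z - θt) ≤ 0 := by
      have hzz : z - θt = (z - θ2) + (θ2 - θt) := by
        funext i; simp only [Pi.sub_apply, Pi.add_apply]; ring
      rw [hzz, ip_add_right, hθ2t, ip_smul_right, ho2 _ hdiff', mul_zero, add_zero]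
      exact hz2
    rw [hvdec, ip_add_left, ip_smul_left, ip_smul_left]
    have t1 := mul_le_mul_of_nonneg_left e1 ha
    have t2 := mul_le_mul_of_nonneg_left e2 hb
    linarith
  constructor
  · apply Finset.ext
    intro p
    rw [mem_Jset]
    constructor
    · intro hp
      by_contra hpJ
      have hn1 := hnb1 p hpJ
      have hn2 := hnb2 p hpJ
      rcases hp with ⟨hEt, heq⟩ | ⟨hmax, hmin, heq⟩
      · rw [hprojt] at heq
        have s1 : θ1 p.1 < θ1 p.2 := by
          have hle := ((memC Et lam maxV minV C hC).1 hθ1C).1 p.1 p.2 hEt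
          exact lt_of_le_of_ne hle fun he => hn1 (Or.inl ⟨hEt, he⟩)
        have s2 : θ2 p.1 < θ2 p.2 := by
          have hle := ((memC Et lam maxV minV C hC).1 hθ2C).1 p.1 p.2 hEt
          exact lt_of_le_of_ne hle fun he => hn2 (Or.inl ⟨hEt, he⟩)
        have hcomb : θt p.1 < θt p.2 := by
          rw [hθt]
          simp only [Pi.add_apply, Pi.smul_apply, smul_eq_mul]
          rcases ha.eq_or_lt with ha0 | ha0
          · rw [← ha0] at hab ⊢
            simp only [zero_mul, zero_add] at hab ⊢
            rw [hab] at *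
            simpa using s2
          · nlinarith [mul_lt_mul_of_pos_left s1 ha0, mul_le_mul_of_nonneg_left s2.le hb]
        exact absurd heq (ne_of_lt hcomb)
      · rw [hprojt] at heq
        have s1 : θ1 p.1 < θ1 p.2 + lam := by
          have hle := ((memC Et lam maxV minV C hC).1 hθ1C).2 p.1 hmax p.2 hmin
          exact lt_of_le_of_ne hle fun he => hn1 (Or.inr ⟨hmax, hmin, he⟩)
        have s2 : θ2 p.1 < θ2 p.2 + lam := by
          have hle := ((memC Et lam maxV minV C hC).1 hθ2C).2 p.1 hmax p.2 hmin
          exact lt_of_le_of_ne hle fun he => hn2 (Or.inr ⟨hmax, hmin, he⟩)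
        have hcomb : θt p.1 < θt p.2 + lam := by
          rw [hθt]
          simp only [Pi.add_apply, Pi.smul_apply, smul_eq_mul]
          rcases ha.eq_or_lt with ha0 | ha0
          · rw [← ha0] at hab ⊢
            simp only [zero_mul, zero_add] at hab ⊢
            rw [hab] at *
            simpa using s2
          · nlinarith [mul_lt_mul_of_pos_left s1 ha0, mul_le_mul_of_nonneg_left s2.le hb, hl]
        exact absurd heq (ne_of_lt hcomb)
    · intro hp
      have b1 := hbp1 p hp
      have b2 := hbp2 p hp
      by_cases hEt : Et p.1 p.2
      · have e1 := bindP_eq_of_Et Et lam maxV minV θh hmaxV hEt b1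
        have e2 := bindP_eq_of_Et Et lam maxV minV θh hmaxV hEt b2
        rw [← hθ1def] at e1
        rw [← hθ2def] at e2
        left
        refine ⟨hEt, ?_⟩
        rw [hprojt, hθt]
        simp only [Pi.add_apply, Pi.smul_apply, smul_eq_mul]
        rw [e1, e2]
      · have r1 : p.1 ∈ maxV ∧ p.2 ∈ minV ∧ θ1 p.1 = θ1 p.2 + lam := by
          rcases b1 with ⟨hE, _⟩ | hr
          · exact absurd hE hEt
          · exact hr
        have r2 : p.1 ∈ maxV ∧ p.2 ∈ minV ∧ θ2 p.1 = θ2 p.2 + lam := by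
          rcases b2 with ⟨hE, _⟩ | hr
          · exact absurd hE hEt
          · exact hr
        right
        refine ⟨r1.1, r1.2.1, ?_⟩
        rw [hprojt, hθt]
        simp only [Pi.add_apply, Pi.smul_apply, smul_eq_mul]
        rw [r1.2.2, r2.2.2]
        linarith
  · intro x hx
    rw [hprojt, hvdec, ip_add_left, ip_smul_left, ip_smul_left, ho1 x hx, ho2 x hx]
    ring

include hmaxV in
lemma local_formula {J : Finset (Fin n × Fin n)} {y z : Fin n → ℝ}
    (hy : y ∈ KJ Et lam maxV minV θh J) (hz : z ∈ KJ Et lam maxV minV θh J) :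
    θh z = θh y + avg (GJ J) (z - θh y) := by
  obtain ⟨hJy, hoy⟩ := hy
  obtain ⟨hJz, hoz⟩ := hz
  have hbpy : ∀ p ∈ J, bindP Et lam maxV minV θh y p := fun p hp =>
    (mem_Jset Et lam maxV minV θh).1 (by rw [hJy]; exact hp)
  have hbpz : ∀ p ∈ J, bindP Et lam maxV minV θh z p := fun p hp =>
    (mem_Jset Et lam maxV minV θh).1 (by rw [hJz]; exact hp)
  set G := GJ J with hG
  set w := z - θh y with hw
  set F := θh y + avg G w with hF
  have hA : constJ J (θh z - θh y) := constJ_diff Et lam maxV minV θh hmaxV hbpz hbpy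
  have hB : constJ J (avg G w) := constJ_iff.2 (compConst_avg G w)
  have hD : constJ J (θh z - F) := by
    have hid : θh z - F = (θh z - θh y) - avg G w := by
      funext i; simp only [hF, Pi.sub_apply, Pi.add_apply]; ring
    rw [hid]; exact constJ_sub hA hB
  have hDc : compConst G (θh z - F) := constJ_iff.1 hD
  have p2 : ip (θh z - F) (z - θh z) = 0 := by
    rw [ip_comm]; exact hoz _ hD
  have p1 : ip (θh z - F) (z - F) = 0 := by
    have hzF : z - F = w - avg G w := by
      funext i; simp only [hF, hw, Pi.sub_apply, Pi.add_apply]; ring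
    rw [hzF, ip_sub_right, ip_comm (θh z - F) (avg G w), ip_avg G w hDc,
      ip_comm w (θh z - F), sub_self]
  have key : ip (θh z - F) (θh z - F) = 0 := by
    have hid : (θh z - F) = (z - F) - (z - θh z) := by
      funext i; simp only [Pi.sub_apply]; ring
    calc ip (θh z - F) (θh z - F)
        = ip (θh z - F) ((z - F) - (z - θh z)) := by rw [← hid]
      _ = ip (θh z - F) (z - F) - ip (θh z - F) (z - θh z) := ip_sub_right _ _ _
      _ = 0 := by rw [p1, p2, sub_self]
  exact sub_eq_zero.1 (eq_zero_of_ip_self key)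

end Proj2

lemma avg_sub (G : SimpleGraph (Fin n)) (x y : Fin n → ℝ) :
    avg G (x - y) = avg G x - avg G y := by
  funext i; unfold avg
  simp only [Pi.sub_apply, Finset.sum_sub_distrib]
  rw [sub_div]

noncomputable def avgL (G : SimpleGraph (Fin n)) : (Fin n → ℝ) →ₗ[ℝ] (Fin n → ℝ) where
  toFun := avg G
  map_add' := avg_add G
  map_smul' := fun c x => by simpa using avg_smul G c x

noncomputable def avgCLM (G : SimpleGraph (Fin n)) : (Fin n → ℝ) →L[ℝ] (Fin n → ℝ) :=
  LinearMap.toContinuousLinearMap (avgL G)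

lemma avgCLM_apply (G : SimpleGraph (Fin n)) (x : Fin n → ℝ) : avgCLM G x = avg G x := rfl

end DivIso

open DivIso in
/-- Bounded isotonic regression on a partially ordered set: `Et` is the
acyclic edge relation of the partial-order constraints, `maxV`/`minV` the maximal/minimal
nodes, and `C` the bounded isotonic polyhedron. For almost every `y` the projection
`θ̂_λ` is differentiable at `y` and its divergence equals the number of connected
components of the (undirected) subgraph of binding constraints: edges `{u,v}` with
`Et u v` and `θ̂_λ(y)_u = θ̂_λ(y)_v`, and edges `{u,v}` with `u ∈ maxV`, `v ∈ minV` and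
`θ̂_λ(y)_u = θ̂_λ(y)_v + λ`. -/
theorem divergence_bounded_isotonic_poset {n : ℕ} (Et : Fin n → Fin n → Prop)
    (hacyc : ∀ i, ¬ Relation.TransGen Et i i)
    (lam : ℝ) (hlam : 0 ≤ lam)
    (maxV minV : Set (Fin n))
    (hmaxV : maxV = {i | ∀ j, ¬ Et i j}) (hminV : minV = {i | ∀ j, ¬ Et j i})
    (C : Set (Fin n → ℝ))
    (hC : C = {θ | (∀ i j, Et i j → θ i ≤ θ j) ∧
      ∀ i ∈ maxV, ∀ j ∈ minV, θ i ≤ θ j + lam})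
    (θhat : (Fin n → ℝ) → (Fin n → ℝ))
    (hproj : ∀ y, θhat y ∈ C ∧ ∀ θ ∈ C, ∑ j, (y j - θhat y j) ^ 2 ≤ ∑ j, (y j - θ j) ^ 2) :
    ∀ᵐ y ∂(volume : Measure (Fin n → ℝ)), DifferentiableAt ℝ θhat y ∧
      divg θhat y =
        (Nat.card (SimpleGraph.fromRel (fun u v : Fin n =>
          (Et u v ∧ θhat y u = θhat y v) ∨
          (u ∈ maxV ∧ v ∈ minV ∧ θhat y u = θhat y v + lam))).ConnectedComponent : ℝ) := by
  classical
  have main : ∀ y : Fin n → ℝ,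
      y ∈ interior (KJ Et lam maxV minV θhat (Jset Et lam maxV minV θhat y)) →
      DifferentiableAt ℝ θhat y ∧
      divg θhat y =
        (Nat.card (SimpleGraph.fromRel (fun u v : Fin n =>
          (Et u v ∧ θhat y u = θhat y v) ∨
          (u ∈ maxV ∧ v ∈ minV ∧ θhat y u = θhat y v + lam))).ConnectedComponent : ℝ) := by
    intro y hy
    set J := Jset Et lam maxV minV θhat y with hJdef
    have hyK : y ∈ KJ Et lam maxV minV θhat J :=
      covering Et lam maxV minV C θhat hC hproj hmaxV y
    set G := GJ (n := n) J with hGdef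
    have hev : θhat =ᶠ[nhds y]
        fun z => avgCLM G z + (θhat y - avg G (θhat y)) := by
      filter_upwards [isOpen_interior.mem_nhds hy] with z hz
      have hzK : z ∈ KJ Et lam maxV minV θhat J := interior_subset hz
      have hloc := local_formula Et lam maxV minV θhat hmaxV hyK hzK
      rw [hloc, avg_sub G z (θhat y)]
      funext i
      simp only [avgCLM_apply, Pi.add_apply, Pi.sub_apply]
      ring
    have hF : HasFDerivAt (fun z => avgCLM G z + (θhat y - avg G (θhat y)))
        (avgCLM G) y := (avgCLM G).hasFDerivAt.add_const _
    have hθF : HasFDerivAt θhat (avgCLM G) y := hF.congr_of_eventuallyEq hev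
    refine ⟨hθF.differentiableAt, ?_⟩
    unfold divg
    rw [hθF.fderiv]
    have htr : ∑ i, avgCLM G (Pi.single i 1) i
        = (Nat.card G.ConnectedComponent : ℝ) := by
      calc ∑ i, avgCLM G (Pi.single i 1) i = ∑ i, avg G (Pi.single i 1) i :=
            Finset.sum_congr rfl fun i _ => by rw [avgCLM_apply]
        _ = (Nat.card G.ConnectedComponent : ℝ) := sum_avg_single G
    rw [htr]
    have hGeq : G = SimpleGraph.fromRel (fun u v : Fin n =>
        (Et u v ∧ θhat y u = θhat y v) ∨
        (u ∈ maxV ∧ v ∈ minV ∧ θhat y u = θhat y v + lam)) := by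
      rw [hGdef, GJ]
      congr 1
      funext u v
      apply propext
      rw [hJdef]
      exact mem_Jset Et lam maxV minV θhat
    rw [hGeq]
  rw [MeasureTheory.ae_iff]
  refine measure_mono_null ?_
    (measure_iUnion_null fun J : Finset (Fin n × Fin n) =>
      (KJ_convex Et lam maxV minV C θhat hC hproj hmaxV J).addHaar_frontier volume)
  intro y hy
  simp only [Set.mem_setOf_eq] at hy
  by_cases hint : y ∈ interior (KJ Et lam maxV minV θhat (Jset Et lam maxV minV θhat y))
  · exact absurd (main y hint) hy
  · refine Set.mem_iUnion.2 ⟨Jset Et lam maxV minV θhat y, ?_⟩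
    rw [← closure_diff_interior]
    exact ⟨subset_closure (covering Et lam maxV minV C θhat hC hproj hmaxV y), hint⟩
end

section
/- In the setting of bounded isotonic regression on a partially ordered set (with isotonic edge set Ẽ on V = {1,…,n}, augmented graph G with edge set E = Ẽ ∪ {(i,j) : i ∈ max(V), j ∈ min(V)}, constraint set C_λ = {θ : θ_i ≤ θ_j ∀(i,j) ∈ Ẽ; θ_i ≤ θ_j + λ ∀ i ∈ max(V), j ∈ min(V)}, projection θ̂_λ(y) = P_{C_λ}(y), binding set J_y(λ) and induced subgraph G_{J_y(λ)} of G), for every fixed y ∈ ℝⁿ the map λ ↦ ω(G_{J_y(λ)}) is non-decreasing in λ on [0,∞); i.e., if 0 ≤ λ₁ ≤ λ₂ then the number of connected components of the undirected version of G_{J_y(λ₁)} is at most that of G_{J_y(λ₂)}. -/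
/-!
Let `x` be the isotonic regression of `y`, i.e. its projection onto the isotonic cone `K`.
Since `x` is orthogonal to `y - x` and `y - x` lies in the polar of `K`, for every box
`[a, b]` and every isotonic `θ` with values in `[a, b]` one has
`‖y - θ‖² ≥ ‖y - x‖² + d(x, [a, b]ⁿ)² = ‖y - clip_[a,b] x‖²`, the equality because both
`clip_[a,b] x` and `x - clip_[a,b] x` are isotonic.
Every point of `C_λ` takes its values in a box of width `λ` (follow the edges up to a maximal
and down to a minimal vertex), so `θ̂_λ = clip_[m, m+λ] x` for any `m` minimizing
`d(x, [m, m+λ]ⁿ)²`. Both parts of this objective are convex in `m`, and an exchange argument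
yields minimizers with `[m₁, m₁ + λ₁] ⊆ [m₂, m₂ + λ₂]`. Then `θ̂_{λ₁}` is a clip of `θ̂_{λ₂}`,
so every constraint binding at `λ₂` still binds at `λ₁`: `G_{J_y(λ₂)}` is a subgraph of
`G_{J_y(λ₁)}` on the same vertices and has at least as many components.
-/

open Set Relation

namespace BoundedIsotonic

variable {ι : Type*}

section ConeProjection

variable [Fintype ι]

theorem exists_forall_dotProduct_sub_nonpos {K : Set (ι → ℝ)} (hne : K.Nonempty)
    (hK : IsClosed K) (hconv : Convex ℝ K) (y : ι → ℝ) :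
    ∃ x ∈ K, ∀ θ ∈ K, (y - x) ⬝ᵥ (θ - x) ≤ 0 := by
  let e := EuclideanSpace.equiv ι ℝ
  have hconv' : Convex ℝ (e ⁻¹' K) := hconv.linear_preimage e.toLinearMap
  obtain ⟨v, hv, hmin⟩ := exists_norm_eq_iInf_of_complete_convex (hne.preimage e.surjective)
    (hK.preimage e.continuous).isComplete hconv' (e.symm y)
  refine ⟨e v, hv, fun θ hθ => ?_⟩
  have := (norm_eq_iInf_iff_real_inner_le_zero hconv' hv).1 hmin (e.symm θ)
    (by simpa using hθ)
  rw [EuclideanSpace.inner_eq_star_dotProduct, star_trivial, dotProduct_comm] at this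
  exact this

/-- Moreau's characterization of `x` as the projection of `y` onto a convex cone `K`. -/
structure IsConeProjection (K : Set (ι → ℝ)) (y x : ι → ℝ) : Prop where
  mem : x ∈ K
  orthogonal : (y - x) ⬝ᵥ x = 0
  dual_nonpos : ∀ θ ∈ K, (y - x) ⬝ᵥ θ ≤ 0

theorem exists_isConeProjection {K : Set (ι → ℝ)} (hK : IsClosed K) (hconv : Convex ℝ K)
    (h0 : (0 : ι → ℝ) ∈ K) (hadd : ∀ u ∈ K, ∀ v ∈ K, u + v ∈ K) (y : ι → ℝ) :
    ∃ x, IsConeProjection K y x := by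
  obtain ⟨x, hx, hvi⟩ := exists_forall_dotProduct_sub_nonpos ⟨0, h0⟩ hK hconv y
  have h₀ := hvi 0 h0
  have h₂ := hvi (x + x) (hadd x hx x hx)
  refine ⟨x, hx, ?_, fun θ hθ => ?_⟩
  · simp only [zero_sub, dotProduct_neg, add_sub_cancel_right] at h₀ h₂
    linarith
  · simpa using hvi (θ + x) (hadd θ hθ x hx)

theorem dotProduct_sub_sub_self (a b c : ι → ℝ) :
    (a - c) ⬝ᵥ (a - c) =
      (a - b) ⬝ᵥ (a - b) + 2 * ((a - b) ⬝ᵥ (b - c)) + (b - c) ⬝ᵥ (b - c) := by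
  simp only [dotProduct, Pi.sub_apply, Finset.mul_sum, ← Finset.sum_add_distrib]
  exact Finset.sum_congr rfl fun j _ => by ring

theorem eq_of_dotProduct_sub_self_le {C : Set (ι → ℝ)} (hC : Convex ℝ C) {y p q : ι → ℝ}
    (hp : p ∈ C) (hq : q ∈ C) (hmin : ∀ θ ∈ C, (y - p) ⬝ᵥ (y - p) ≤ (y - θ) ⬝ᵥ (y - θ))
    (hle : (y - q) ⬝ᵥ (y - q) ≤ (y - p) ⬝ᵥ (y - p)) : q = p := by
  set m : ι → ℝ := (2⁻¹ : ℝ) • p + (2⁻¹ : ℝ) • q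
  have hm : m ∈ C := hC hp hq (by norm_num) (by norm_num) (by norm_num)
  have hparallelogram : (y - m) ⬝ᵥ (y - m) =
      ((y - p) ⬝ᵥ (y - p) + (y - q) ⬝ᵥ (y - q)) / 2 - (q - p) ⬝ᵥ (q - p) / 4 := by
    simp only [m, dotProduct, Pi.sub_apply, Pi.add_apply, Pi.smul_apply, smul_eq_mul,
      Finset.sum_div, ← Finset.sum_add_distrib, ← Finset.sum_sub_distrib]
    exact Finset.sum_congr rfl fun j _ => by ring
  have hnonneg : 0 ≤ (q - p) ⬝ᵥ (q - p) := Finset.sum_nonneg fun j _ => mul_self_nonneg _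
  rw [← sub_eq_zero, ← dotProduct_self_eq_zero]
  linarith [hmin m hm]

end ConeProjection

section Clip

noncomputable def clip (a b s : ℝ) : ℝ := max a (min b s)

variable {a b s : ℝ}

theorem clip_mono (a b : ℝ) : Monotone (clip a b) :=
  fun _ _ h => max_le_max le_rfl (min_le_min le_rfl h)

theorem monotone_sub_clip (a b : ℝ) : Monotone fun s => s - clip a b s := by
  intro s t h
  simp only [clip, max_def, min_def]
  split_ifs <;> linarith

theorem clip_mem_Icc (hab : a ≤ b) (s : ℝ) : clip a b s ∈ Icc a b :=
  ⟨le_max_left _ _, max_le hab (min_le_left _ _)⟩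

theorem clip_of_le_left (h : s ≤ a) : clip a b s = a :=
  max_eq_left ((min_le_right _ _).trans h)

theorem clip_of_right_le (hab : a ≤ b) (h : b ≤ s) : clip a b s = b := by
  rw [clip, min_eq_left h, max_eq_right hab]

theorem clip_clip {a' b' : ℝ} (ha : a ≤ a') (hab' : a' ≤ b') (hb : b' ≤ b) (s : ℝ) :
    clip a' b' (clip a b s) = clip a' b' s := by
  simp only [clip, max_def, min_def]
  split_ifs <;> linarith

theorem sq_sub_clip_le {t : ℝ} (ht : t ∈ Icc a b) (s : ℝ) :
    (s - clip a b s) ^ 2 ≤ (s - t) ^ 2 := by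
  obtain ⟨hat, htb⟩ := ht
  simp only [clip, max_def, min_def]
  split_ifs <;> nlinarith

theorem sq_sub_clip (hab : a ≤ b) (s : ℝ) :
    (s - clip a b s) ^ 2 = (a - s)⁺ ^ 2 + (s - b)⁺ ^ 2 := by
  rcases le_total s a with h | h
  · rw [clip_of_le_left h, posPart_eq_self.2 (by linarith), posPart_eq_zero.2 (by linarith)]
    ring
  rcases le_total b s with h' | h'
  · rw [clip_of_right_le hab h', posPart_eq_zero.2 (by linarith),
      posPart_eq_self.2 (by linarith)]
    ring
  · rw [clip, min_eq_right h', max_eq_right h, posPart_eq_zero.2 (by linarith),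
      posPart_eq_zero.2 (by linarith)]
    ring

theorem sq_posPart_add_sub_le {p q r : ℝ} (hpq : p ≤ q) (hr : 0 ≤ r) :
    (p + r)⁺ ^ 2 - p⁺ ^ 2 ≤ (q + r)⁺ ^ 2 - q⁺ ^ 2 := by
  simp only [posPart, max_def]
  split_ifs <;> nlinarith

end Clip

section Isotonic

variable (E : ι → ι → Prop)

def isotonicCone : Set (ι → ℝ) := {θ | ∀ i j, E i j → θ i ≤ θ j}

def boundedIsotonicSet (S T : Set ι) (l : ℝ) : Set (ι → ℝ) :=
  {θ | θ ∈ isotonicCone E ∧ ∀ i ∈ S, ∀ j ∈ T, θ i ≤ θ j + l}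

variable {E}

theorem isClosed_isotonicCone : IsClosed (isotonicCone E) := by
  simp only [isotonicCone, ofPred_forall]
  exact isClosed_iInter fun i => isClosed_iInter fun j => isClosed_iInter fun _ =>
    isClosed_le (continuous_apply i) (continuous_apply j)

theorem convex_isotonicCone : Convex ℝ (isotonicCone E) :=
  fun _ hu _ hv _ _ ha hb _ i j hij =>
    add_le_add (mul_le_mul_of_nonneg_left (hu i j hij) ha)
      (mul_le_mul_of_nonneg_left (hv i j hij) hb)

theorem zero_mem_isotonicCone : (0 : ι → ℝ) ∈ isotonicCone E := fun _ _ _ => le_rfl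

theorem add_mem_isotonicCone {u v : ι → ℝ} (hu : u ∈ isotonicCone E)
    (hv : v ∈ isotonicCone E) : u + v ∈ isotonicCone E :=
  fun i j hij => add_le_add (hu i j hij) (hv i j hij)

theorem comp_mem_isotonicCone {f : ℝ → ℝ} (hf : Monotone f) {θ : ι → ℝ}
    (hθ : θ ∈ isotonicCone E) : f ∘ θ ∈ isotonicCone E :=
  fun i j hij => hf (hθ i j hij)

theorem le_of_reflTransGen {θ : ι → ℝ} (hθ : θ ∈ isotonicCone E) {i j : ι}
    (hij : ReflTransGen E i j) : θ i ≤ θ j := by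
  induction hij with
  | refl => exact le_rfl
  | tail _ hbc ih => exact ih.trans (hθ _ _ hbc)

theorem convex_boundedIsotonicSet (S T : Set ι) (l : ℝ) :
    Convex ℝ (boundedIsotonicSet E S T l) := by
  intro u hu v hv a b ha hb hab
  refine ⟨convex_isotonicCone hu.1 hv.1 ha hb hab, fun i hi j hj => ?_⟩
  simp only [Pi.add_apply, Pi.smul_apply, smul_eq_mul]
  have := add_le_add (mul_le_mul_of_nonneg_left (hu.2 i hi j hj) ha)
    (mul_le_mul_of_nonneg_left (hv.2 i hi j hj) hb)
  linear_combination this + l * hab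

theorem clip_comp_mem_boundedIsotonicSet {x : ι → ℝ} (hx : x ∈ isotonicCone E)
    (S T : Set ι) {l : ℝ} (hl : 0 ≤ l) (a : ℝ) :
    clip a (a + l) ∘ x ∈ boundedIsotonicSet E S T l := by
  refine ⟨comp_mem_isotonicCone (clip_mono _ _) hx, fun i _ j _ => ?_⟩
  have hi := clip_mem_Icc (by linarith : a ≤ a + l) (x i)
  have hj := clip_mem_Icc (by linarith : a ≤ a + l) (x j)
  simp only [Function.comp_apply]
  linarith [hi.2, hj.1]

variable [Finite ι]

theorem exists_reflTransGen_forall_not (hacyc : ∀ i, ¬ TransGen E i i) (k : ι) :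
    ∃ i, ReflTransGen E k i ∧ ∀ j, ¬ E i j := by
  have : IsTrans ι (fun a b => TransGen E b a) := ⟨fun _ _ _ h₁ h₂ => h₂.trans h₁⟩
  have : Std.Irrefl (fun a b : ι => TransGen E b a) := ⟨hacyc⟩
  obtain ⟨i, hki, hmax⟩ :=
    (Finite.wellFounded_of_trans_of_irrefl fun a b => TransGen E b a).has_min
      {i | ReflTransGen E k i} ⟨k, .refl⟩
  exact ⟨i, hki, fun j hij => hmax j (hki.tail hij) (.single hij)⟩

theorem exists_forall_mem_Icc (hacyc : ∀ i, ¬ TransGen E i i) {l : ℝ} {θ : ι → ℝ}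
    (hθ : θ ∈ boundedIsotonicSet E {i | ∀ j, ¬ E i j} {i | ∀ j, ¬ E j i} l) :
    ∃ m, ∀ j, θ j ∈ Icc m (m + l) := by
  cases isEmpty_or_nonempty ι
  · exact ⟨0, isEmptyElim⟩
  obtain ⟨k, hk⟩ := Finite.exists_min θ
  refine ⟨θ k, fun j => ⟨hk j, ?_⟩⟩
  obtain ⟨i, hji, hi⟩ := exists_reflTransGen_forall_not hacyc j
  obtain ⟨i', hki', hi'⟩ := exists_reflTransGen_forall_not (E := flip E)
    (fun i h => hacyc i (transGen_swap.1 h)) k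
  calc θ j ≤ θ i := le_of_reflTransGen hθ.1 hji
    _ ≤ θ i' + l := hθ.2 i hi i' hi'
    _ ≤ θ k + l := by grw [le_of_reflTransGen hθ.1 (reflTransGen_swap.1 hki')]

end Isotonic

section Excess

variable [Fintype ι]

noncomputable def lowerExcess (x : ι → ℝ) (a : ℝ) : ℝ := ∑ j, (a - x j)⁺ ^ 2

noncomputable def upperExcess (x : ι → ℝ) (b : ℝ) : ℝ := ∑ j, (x j - b)⁺ ^ 2

variable {x : ι → ℝ} {a b : ℝ}

theorem dotProduct_sub_clip_comp_eq_excess (hab : a ≤ b) :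
    (x - clip a b ∘ x) ⬝ᵥ (x - clip a b ∘ x) = lowerExcess x a + upperExcess x b := by
  simp only [dotProduct, Pi.sub_apply, Function.comp_apply, ← sq, sq_sub_clip hab,
    Finset.sum_add_distrib, lowerExcess, upperExcess]

theorem lowerExcess_add_upperExcess_le (hab : a ≤ b) {θ : ι → ℝ}
    (hθ : ∀ j, θ j ∈ Icc a b) :
    lowerExcess x a + upperExcess x b ≤ (x - θ) ⬝ᵥ (x - θ) := by
  rw [← dotProduct_sub_clip_comp_eq_excess hab]
  simp only [dotProduct, Pi.sub_apply, Function.comp_apply, ← sq]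
  exact Finset.sum_le_sum fun j _ => sq_sub_clip_le (hθ j) (x j)

theorem lowerExcess_add_sub_le (x : ι → ℝ) ⦃p q r : ℝ⦄ (hpq : p ≤ q) (hr : 0 ≤ r) :
    lowerExcess x (p + r) - lowerExcess x p ≤ lowerExcess x (q + r) - lowerExcess x q := by
  simp only [lowerExcess, ← Finset.sum_sub_distrib]
  refine Finset.sum_le_sum fun j _ => ?_
  rw [add_sub_right_comm p, add_sub_right_comm q]
  exact sq_posPart_add_sub_le (by linarith) hr

theorem upperExcess_add_sub_le (x : ι → ℝ) ⦃p q r : ℝ⦄ (hpq : p ≤ q) (hr : 0 ≤ r) :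
    upperExcess x (p + r) - upperExcess x p ≤ upperExcess x (q + r) - upperExcess x q := by
  simp only [upperExcess, ← Finset.sum_sub_distrib]
  refine Finset.sum_le_sum fun j _ => ?_
  have h := sq_posPart_add_sub_le (p := x j - q - r) (q := x j - p - r) (by linarith) hr
  rw [sub_add_cancel, sub_add_cancel] at h
  rw [← sub_sub, ← sub_sub]
  linarith

end Excess

section Exchange

variable {φ ψ : ℝ → ℝ}

theorem exists_forall_le_nested
    (hφ : ∀ ⦃p q r : ℝ⦄, p ≤ q → 0 ≤ r → φ (p + r) - φ p ≤ φ (q + r) - φ q)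
    (hψ : ∀ ⦃p q r : ℝ⦄, p ≤ q → 0 ≤ r → ψ (p + r) - ψ p ≤ ψ (q + r) - ψ q)
    {l₁ l₂ m₁ m₂ : ℝ} (hl : l₁ ≤ l₂)
    (hm₁ : ∀ α, φ m₁ + ψ (m₁ + l₁) ≤ φ α + ψ (α + l₁))
    (hm₂ : ∀ α, φ m₂ + ψ (m₂ + l₂) ≤ φ α + ψ (α + l₂)) :
    ∃ m, (∀ α, φ m + ψ (m + l₂) ≤ φ α + ψ (α + l₂)) ∧ m ≤ m₁ ∧ m₁ + l₁ ≤ m + l₂ := by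
  rcases lt_or_ge m₁ m₂ with h | h
  · refine ⟨m₁, fun α => ?_, le_rfl, by linarith⟩
    have hexch := hψ (p := m₁ + l₁) (q := m₂ + l₁) (r := l₂ - l₁) (by linarith) (by linarith)
    rw [add_add_sub_cancel, add_add_sub_cancel] at hexch
    linarith [hm₁ m₂, hm₂ α]
  rcases lt_or_ge (m₂ + l₂) (m₁ + l₁) with h' | h'
  · refine ⟨m₁ - (l₂ - l₁), fun α => ?_, by linarith, by linarith⟩
    have hexch := hφ (p := m₂) (q := m₁ - (l₂ - l₁)) (r := l₂ - l₁) (by linarith)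
      (by linarith)
    have h₁ := hm₁ (m₂ + (l₂ - l₁))
    rw [sub_add_cancel] at hexch
    rw [add_assoc, sub_add_cancel] at h₁
    rw [show m₁ - (l₂ - l₁) + l₂ = m₁ + l₁ by ring]
    linarith [hm₂ α]
  · exact ⟨m₂, hm₂, h, h'⟩

end Exchange

section Projection

variable [Fintype ι] {E : ι → ι → Prop} {x y : ι → ℝ}

namespace IsConeProjection

theorem dotProduct_sub_clip_comp_eq_zero (hx : IsConeProjection (isotonicCone E) y x)
    (a b : ℝ) : (y - x) ⬝ᵥ (x - clip a b ∘ x) = 0 := by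
  have hclip := hx.dual_nonpos _ (comp_mem_isotonicCone (clip_mono a b) hx.mem)
  have hsub : (y - x) ⬝ᵥ (x - clip a b ∘ x) ≤ 0 :=
    hx.dual_nonpos _ (comp_mem_isotonicCone (monotone_sub_clip a b) hx.mem)
  rw [dotProduct_sub, hx.orthogonal] at hsub ⊢
  linarith

theorem dotProduct_sub_clip_comp (hx : IsConeProjection (isotonicCone E) y x) {a b : ℝ}
    (hab : a ≤ b) : (y - clip a b ∘ x) ⬝ᵥ (y - clip a b ∘ x) =
      (y - x) ⬝ᵥ (y - x) + lowerExcess x a + upperExcess x b := by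
  rw [dotProduct_sub_sub_self y x, hx.dotProduct_sub_clip_comp_eq_zero,
    dotProduct_sub_clip_comp_eq_excess hab]
  ring

theorem add_excess_le (hx : IsConeProjection (isotonicCone E) y x) {a b : ℝ} (hab : a ≤ b)
    {θ : ι → ℝ} (hθ : θ ∈ isotonicCone E) (hθab : ∀ j, θ j ∈ Icc a b) :
    (y - x) ⬝ᵥ (y - x) + lowerExcess x a + upperExcess x b ≤ (y - θ) ⬝ᵥ (y - θ) := by
  have hcross : 0 ≤ (y - x) ⬝ᵥ (x - θ) := by
    rw [dotProduct_sub, hx.orthogonal]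
    linarith [hx.dual_nonpos θ hθ]
  rw [dotProduct_sub_sub_self y x θ]
  linarith [lowerExcess_add_upperExcess_le (x := x) hab hθab]

theorem eq_clip_comp_of_forall_le (hacyc : ∀ i, ¬ TransGen E i i)
    (hx : IsConeProjection (isotonicCone E) y x) {l : ℝ} (hl : 0 ≤ l) {θ : ι → ℝ}
    (hθ : θ ∈ boundedIsotonicSet E {i | ∀ j, ¬ E i j} {i | ∀ j, ¬ E j i} l)
    (hmin : ∀ θ' ∈ boundedIsotonicSet E {i | ∀ j, ¬ E i j} {i | ∀ j, ¬ E j i} l,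
      (y - θ) ⬝ᵥ (y - θ) ≤ (y - θ') ⬝ᵥ (y - θ')) :
    (∃ m, ∀ α, lowerExcess x m + upperExcess x (m + l) ≤
        lowerExcess x α + upperExcess x (α + l)) ∧
      ∀ α, (∀ β, lowerExcess x α + upperExcess x (α + l) ≤
        lowerExcess x β + upperExcess x (β + l)) → θ = clip α (α + l) ∘ x := by
  have hwidth (α : ℝ) : α ≤ α + l := by linarith
  have hclip_mem := clip_comp_mem_boundedIsotonicSet hx.mem {i | ∀ j, ¬ E i j}
    {i | ∀ j, ¬ E j i} hl
  have hle (α : ℝ) := hx.dotProduct_sub_clip_comp (hwidth α) ▸ hmin _ (hclip_mem α)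
  obtain ⟨m, hm⟩ := exists_forall_mem_Icc hacyc hθ
  have hge := hx.add_excess_le (hwidth m) hθ.1 hm
  refine ⟨⟨m, fun α => by linarith [hle α]⟩, fun α hα => ?_⟩
  refine (eq_of_dotProduct_sub_self_le (convex_boundedIsotonicSet _ _ l) hθ (hclip_mem α)
    hmin ?_).symm
  rw [hx.dotProduct_sub_clip_comp (hwidth α)]
  linarith [hα m]

end IsConeProjection

end Projection

section BindingGraph

variable (E : ι → ι → Prop) (S T : Set ι)

def bindingGraph (l : ℝ) (θ : ι → ℝ) : SimpleGraph ι :=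
  SimpleGraph.fromRel fun u v => (E u v ∧ θ u = θ v) ∨ (u ∈ S ∧ v ∈ T ∧ θ u = θ v + l)

variable {E S T}

theorem bindingGraph_le_clip_comp {θ : ι → ℝ} {a a' l l' : ℝ}
    (hθ : ∀ j, θ j ∈ Icc a (a + l)) (ha : a ≤ a') (hb : a' + l' ≤ a + l) (hl' : 0 ≤ l') :
    bindingGraph E S T l θ ≤ bindingGraph E S T l' (clip a' (a' + l') ∘ θ) := by
  set θ' := clip a' (a' + l') ∘ θ with hθ'
  have hbinding (u v : ι) : (E u v ∧ θ u = θ v) ∨ (u ∈ S ∧ v ∈ T ∧ θ u = θ v + l) →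
      (E u v ∧ θ' u = θ' v) ∨ (u ∈ S ∧ v ∈ T ∧ θ' u = θ' v + l') := by
    rintro (⟨huv, heq⟩ | ⟨hu, hv, heq⟩)
    · exact .inl ⟨huv, by simp only [θ', Function.comp_apply, heq]⟩
    · have hθu : θ u = a + l := by linarith [(hθ u).2, (hθ v).1]
      have hθv : θ v = a := by linarith [(hθ u).2, (hθ v).1]
      refine .inr ⟨hu, hv, ?_⟩
      rw [hθ', Function.comp_apply, Function.comp_apply, hθu, hθv,
        clip_of_right_le (by linarith) hb, clip_of_le_left ha]
  intro u v huv
  rw [bindingGraph, SimpleGraph.fromRel_adj] at huv ⊢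
  exact ⟨huv.1, huv.2.imp (hbinding u v) (hbinding v u)⟩

end BindingGraph

end BoundedIsotonic

open BoundedIsotonic in
/-- For bounded isotonic regression on a poset, for every fixed `y` the
number of connected components of the binding-constraint subgraph `G_{J_y(λ)}`
(whose divergence/degrees-of-freedom it equals) is non-decreasing in the bound `λ`. -/
theorem bounded_isotonic_components_monotone {n : ℕ} (Et : Fin n → Fin n → Prop)
    (hacyc : ∀ i, ¬ Relation.TransGen Et i i)
    (maxV minV : Set (Fin n))
    (hmaxV : maxV = {i | ∀ j, ¬ Et i j}) (hminV : minV = {i | ∀ j, ¬ Et j i})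
    (Cl : ℝ → Set (Fin n → ℝ))
    (hCl : ∀ lam : ℝ, Cl lam = {θ | (∀ i j, Et i j → θ i ≤ θ j) ∧
      ∀ i ∈ maxV, ∀ j ∈ minV, θ i ≤ θ j + lam})
    (y : Fin n → ℝ)
    (θhatl : ℝ → (Fin n → ℝ))
    (hprojl : ∀ lam : ℝ, 0 ≤ lam → θhatl lam ∈ Cl lam ∧
      ∀ θ ∈ Cl lam, ∑ j, (y j - θhatl lam j) ^ 2 ≤ ∑ j, (y j - θ j) ^ 2)
    -- the binding-constraint subgraph of the augmented graph, for each λ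
    (G : ℝ → SimpleGraph (Fin n))
    (hG : ∀ lam : ℝ, G lam = SimpleGraph.fromRel (fun u v =>
      (Et u v ∧ θhatl lam u = θhatl lam v) ∨
      (u ∈ maxV ∧ v ∈ minV ∧ θhatl lam u = θhatl lam v + lam)))
    (lam₁ lam₂ : ℝ) (h₁ : 0 ≤ lam₁) (h₁₂ : lam₁ ≤ lam₂) :
    Nat.card (G lam₁).ConnectedComponent ≤ Nat.card (G lam₂).ConnectedComponent := by
  subst hmaxV hminV
  obtain rfl : Cl = boundedIsotonicSet Et _ _ := funext hCl
  obtain rfl : G = fun lam => bindingGraph Et _ _ lam (θhatl lam) := funext hG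
  obtain ⟨x, hx⟩ := exists_isConeProjection isClosed_isotonicCone convex_isotonicCone
    zero_mem_isotonicCone (fun _ hu _ hv => add_mem_isotonicCone hu hv) y
  have hproj (lam : ℝ) (hlam : 0 ≤ lam) := hx.eq_clip_comp_of_forall_le hacyc hlam
    (hprojl lam hlam).1 fun θ hθ => by
      simpa only [dotProduct, Pi.sub_apply, ← sq] using (hprojl lam hlam).2 θ hθ
  obtain ⟨⟨m₁, hm₁⟩, hθ₁⟩ := hproj lam₁ h₁
  obtain ⟨⟨m₂, hm₂⟩, hθ₂⟩ := hproj lam₂ (h₁.trans h₁₂)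
  obtain ⟨m, hm, hmm₁, hm₁m⟩ := exists_forall_le_nested (lowerExcess_add_sub_le x)
    (upperExcess_add_sub_le x) h₁₂ hm₁ hm₂
  have hθ₁₂ : θhatl lam₁ = clip m₁ (m₁ + lam₁) ∘ θhatl lam₂ := by
    rw [hθ₁ m₁ hm₁, hθ₂ m hm]
    exact funext fun j => (clip_clip hmm₁ (by linarith) hm₁m _).symm
  beta_reduce
  rw [hθ₁₂]
  refine SimpleGraph.ConnectedComponent.card_le_card_of_le
    (bindingGraph_le_clip_comp ?_ hmm₁ hm₁m h₁)
  rw [hθ₂ m hm]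
  exact fun j => clip_mem_Icc (by linarith) _
end

section
/- Let x₁,…,x_n be n distinct points in ℝᵈ and θ ∈ ℝⁿ. Then there exists a convex function f : ℝᵈ → ℝ with f(x_i) = θ_i for all i = 1,…,n if and only if there exist vectors ξ₁,…,ξ_n ∈ ℝᵈ such that ⟨ξ_j, x_k − x_j⟩ ≤ θ_k − θ_j for all j ≠ k in {1,…,n}. -/
/-!
A convex function has a subgradient at every point (a supporting hyperplane of its epigraph),
which gives the subgradient inequalities at the data points. Conversely, the maximum of the
affine functions `y ↦ θⱼ + ⟨ξⱼ, y - xⱼ⟩` is convex, and the inequalities say exactly that at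
`xᵢ` every one of them is at most `θᵢ`, with equality for `j = i`.
-/

open Matrix Set

theorem ContinuousOn.isOpen_strict_epigraph {E : Type*} [TopologicalSpace E] {s : Set E}
    {f : E → ℝ} (hs : IsOpen s) (hf : ContinuousOn f s) :
    IsOpen {p : E × ℝ | p.1 ∈ s ∧ f p.1 < p.2} := by
  have hcont : ContinuousOn (fun p : E × ℝ => p.2 - f p.1) (s ×ˢ univ) :=
    continuousOn_snd.sub (hf.comp continuousOn_fst fun _ hp => hp.1)
  convert hcont.isOpen_inter_preimage (hs.prod isOpen_univ) (isOpen_Ioi (a := 0)) using 1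
  ext p
  simp

section Subgradient

variable {E : Type*} [TopologicalSpace E] [AddCommGroup E] [IsTopologicalAddGroup E]
  [Module ℝ E] [ContinuousSMul ℝ E] {s : Set E} {f : E → ℝ}

/-- Separate `(x₀, f x₀)` from the open convex strict epigraph of `f`; the separating functional
has positive vertical component `b`, and `-b⁻¹` times its horizontal part is a subgradient. -/
theorem ConvexOn.exists_subgradient_of_continuousOn (hf : ConvexOn ℝ s f) (hs : IsOpen s)
    (hfc : ContinuousOn f s) {x₀ : E} (hx₀ : x₀ ∈ s) :
    ∃ φ : StrongDual ℝ E, ∀ y ∈ s, φ (y - x₀) ≤ f y - f x₀ := by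
  obtain ⟨g, hg⟩ := geometric_hahn_banach_point_open hf.convex_strict_epigraph
    (hfc.isOpen_strict_epigraph hs) (x := (x₀, f x₀)) (by simp)
  set φ := g.comp (ContinuousLinearMap.inl ℝ E ℝ)
  set b := g (0, 1)
  have hg_apply : ∀ y t, g (y, t) = φ y + t * b := fun y t => by
    rw [show (y, t) = ContinuousLinearMap.inl ℝ E ℝ y + t • ((0 : E), (1 : ℝ)) by simp,
      map_add, map_smul, smul_eq_mul]
    rfl
  have hb : 0 < b := by
    have := hg (x₀, f x₀ + 1) ⟨hx₀, lt_add_one _⟩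
    rw [hg_apply, hg_apply] at this
    linarith
  refine ⟨-b⁻¹ • φ, fun y hy => ?_⟩
  suffices b⁻¹ * (φ x₀ - φ y) + f x₀ ≤ f y by
    simp only [FunLike.coe_smul, Pi.smul_apply, map_sub, smul_eq_mul]
    linarith
  refine le_of_forall_gt_imp_ge_of_dense fun t ht => ?_
  have hsep := hg (y, t) ⟨hy, ht⟩
  rw [hg_apply, hg_apply] at hsep
  rw [← le_sub_iff_add_le, inv_mul_le_iff₀ hb]
  linarith

end Subgradient

theorem ConvexOn.exists_dotProduct_subgradient {ι : Type*} [Fintype ι] {s : Set (ι → ℝ)}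
    {f : (ι → ℝ) → ℝ} (hf : ConvexOn ℝ s f) (hs : IsOpen s) {x₀ : ι → ℝ} (hx₀ : x₀ ∈ s) :
    ∃ ξ : ι → ℝ, ∀ y ∈ s, ξ ⬝ᵥ (y - x₀) ≤ f y - f x₀ := by
  classical
  obtain ⟨φ, hφ⟩ := hf.exists_subgradient_of_continuousOn hs (hf.continuousOn hs) hx₀
  refine ⟨(dotProductEquiv ℝ ι).symm φ.toLinearMap, fun y hy => ?_⟩
  have h := (dotProductEquiv ℝ ι).apply_symm_apply φ.toLinearMap
  exact (LinearMap.congr_fun h (y - x₀)).trans_le (hφ y hy)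

theorem Finset.convexOn_sup' {ι E : Type*} [AddCommMonoid E] [Module ℝ E] {s : Set E}
    (t : Finset ι) (ht : t.Nonempty) {f : ι → E → ℝ} (hf : ∀ i ∈ t, ConvexOn ℝ s (f i)) :
    ConvexOn ℝ s fun y => t.sup' ht fun i => f i y := by
  simp_rw [← Finset.sup'_apply]
  exact Finset.sup'_induction ht f (fun _ h₁ _ h₂ => h₁.sup h₂) hf

theorem exists_convexOn_interpolation_of_linear_minorants {ι E : Type*} [Fintype ι]
    [AddCommGroup E] [Module ℝ E] (x : ι → E) (θ : ι → ℝ) (φ : ι → E →ₗ[ℝ] ℝ)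
    (h : ∀ j k, j ≠ k → φ j (x k - x j) ≤ θ k - θ j) :
    ∃ f : E → ℝ, ConvexOn ℝ univ f ∧ ∀ i, f (x i) = θ i := by
  cases isEmpty_or_nonempty ι
  · exact ⟨fun _ => 0, convexOn_const 0 convex_univ, isEmptyElim⟩
  refine ⟨fun y => Finset.univ.sup' Finset.univ_nonempty fun j => φ j y + (θ j - φ j (x j)),
    Finset.univ.convexOn_sup' _ fun j _ => ((φ j).convexOn convex_univ).add_const _,
    fun i => le_antisymm (Finset.sup'_le _ _ fun j _ => ?_)
      (Finset.le_sup'_of_le _ (Finset.mem_univ i) (by simp))⟩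
  rcases eq_or_ne j i with rfl | hji
  · simp
  · have := h j i hji
    rw [map_sub] at this
    linarith

theorem convex_interpolation_iff_subgradients_general {n d : ℕ}
    (x : Fin n → (Fin d → ℝ)) (θ : Fin n → ℝ) :
    (∃ f : (Fin d → ℝ) → ℝ, ConvexOn ℝ Set.univ f ∧ ∀ i, f (x i) = θ i) ↔
      (∃ ξ : Fin n → (Fin d → ℝ), ∀ j k : Fin n, j ≠ k →
        ξ j ⬝ᵥ (x k - x j) ≤ θ k - θ j) := by
  constructor
  · rintro ⟨f, hf, hfx⟩
    choose ξ hξ using fun j => hf.exists_dotProduct_subgradient isOpen_univ (mem_univ (x j))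
    refine ⟨ξ, fun j k _ => ?_⟩
    simpa only [hfx] using hξ j (x k) (mem_univ _)
  · rintro ⟨ξ, hξ⟩
    exact exists_convexOn_interpolation_of_linear_minorants x θ
      (fun j => dotProductBilin ℝ ℝ (ξ j)) hξ

/-- For distinct points `x₁,…,x_n ∈ ℝᵈ` and values `θ ∈ ℝⁿ`, there is a
convex function `f : ℝᵈ → ℝ` interpolating `f(xᵢ) = θᵢ` iff there exist subgradient
vectors `ξ₁,…,ξ_n ∈ ℝᵈ` with `⟨ξⱼ, x_k − x_j⟩ ≤ θ_k − θ_j` for all `j ≠ k`. -/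
theorem convex_interpolation_iff_subgradients {n d : ℕ}
    (x : Fin n → (Fin d → ℝ)) (hx : Function.Injective x) (θ : Fin n → ℝ) :
    (∃ f : (Fin d → ℝ) → ℝ, ConvexOn ℝ Set.univ f ∧ ∀ i, f (x i) = θ i) ↔
      (∃ ξ : Fin n → (Fin d → ℝ), ∀ j k : Fin n, j ≠ k →
        ξ j ⬝ᵥ (x k - x j) ≤ θ k - θ j) :=
  convex_interpolation_iff_subgradients_general x θ
end

section
/- Let A ∈ ℝ^{m×p}, B ∈ ℝ^{m×n}, c ∈ ℝᵐ, d ∈ ℝᵖ, and suppose the polyhedron Q = {(ξ,θ) ∈ ℝ^{p+n} : Aξ + Bθ ≤ c} is nonempty. Fix y ∈ ℝⁿ. Then the objective (ξ,θ) ↦ (1/2)‖θ − y‖₂² + dᵀξ is bounded below on Q if and only if there exists λ ∈ ℝᵐ with λ ≥ 0 (componentwise) such that −d = Aᵀλ. -/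
/-!
If the objective is bounded below on `Q`, then `d ⬝ᵥ x ≥ 0` for every recession direction `x`
of `Q` in the `ξ`-variables (`A x ≤ 0`), since `ξ` can be moved along `x` without changing `θ`.
Farkas' lemma, proved here by Fourier–Motzkin elimination, turns this into `-d = Aᵀ λ` with
`λ ≥ 0`. Conversely, such a `λ` gives the weak-duality bound
`dᵀξ ≥ (Bᵀλ)ᵀθ - λᵀc` on `Q`, and completing the square in `θ` bounds the objective below.
-/

open Matrix

theorem sum_smul_add_smul_eq_of_sum_smul_sub_smul_eq {R M : Type*} [CommRing R]
    [AddCommGroup M] [Module R M] {m : ℕ} {v : Fin m → M} {g w : M} {μ c : Fin m → R} {k : R}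
    (h : ∑ i, μ i • (v i - c i • g) = w - k • g) :
    ∑ i, μ i • v i + (k - ∑ i, μ i * c i) • g = w := by
  have hsum : ∑ i, μ i • (v i - c i • g) = ∑ i, μ i • v i - (∑ i, μ i * c i) • g := by
    simp only [smul_sub, smul_smul, Finset.sum_sub_distrib, Finset.sum_smul]
  rw [hsum] at h
  linear_combination (norm := module) h

namespace Module.Dual

variable {𝕜 E : Type*} [Field 𝕜] [AddCommGroup E] [Module 𝕜 E]

theorem sub_smul_apply_eq_apply_sub_smul (f g : Module.Dual 𝕜 E) (x₀ x : E) (t : 𝕜) :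
    (f - (f x₀ / t) • g) x = f (x - (g x / t) • x₀) := by
  simp only [LinearMap.sub_apply, LinearMap.smul_apply, map_sub, map_smul, smul_eq_mul]
  ring

variable [LinearOrder 𝕜]

/-- Fourier–Motzkin step: precomposing with the projection along `x₀` onto `ker g` removes the
constraint `g ≤ 0`. -/
theorem sub_smul_apply_nonpos_of_eliminate {m : ℕ} {a : Fin m → Module.Dual 𝕜 E}
    {g b : Module.Dual 𝕜 E} {x₀ : E} (hgx₀ : g x₀ ≠ 0)
    (h : ∀ x, g x ≤ 0 → (∀ i, a i x ≤ 0) → b x ≤ 0) (x : E)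
    (hx : ∀ i, (a i - (a i x₀ / g x₀) • g) x ≤ 0) :
    (b - (b x₀ / g x₀) • g) x ≤ 0 := by
  have hg : g (x - (g x / g x₀) • x₀) = 0 := by
    simp only [map_sub, map_smul, smul_eq_mul]
    field_simp
    ring
  simp only [sub_smul_apply_eq_apply_sub_smul] at hx ⊢
  exact h _ hg.le hx

variable [IsStrictOrderedRing 𝕜]

theorem eq_zero_of_forall_apply_nonpos {b : Module.Dual 𝕜 E} (h : ∀ x, b x ≤ 0) : b = 0 :=
  LinearMap.ext fun x => le_antisymm (h x) (by simpa using h (-x))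

theorem exists_nonneg_sum_smul_eq_of_forall_nonpos {m : ℕ} (a : Fin m → Module.Dual 𝕜 E)
    (b : Module.Dual 𝕜 E) (h : ∀ x, (∀ i, a i x ≤ 0) → b x ≤ 0) :
    ∃ μ : Fin m → 𝕜, 0 ≤ μ ∧ ∑ i, μ i • a i = b := by
  induction m generalizing b with
  | zero => exact ⟨0, le_rfl, by simpa using (eq_zero_of_forall_apply_nonpos (h · nofun)).symm⟩
  | succ m ih =>
    set g := a (Fin.last m)
    by_cases hc : ∀ x, (∀ i : Fin m, a i.castSucc x ≤ 0) → b x ≤ 0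
    · obtain ⟨μ, hμ, hsum⟩ := ih _ b hc
      refine ⟨Fin.snoc μ 0, Fin.lastCases (by simp) (fun i => by simpa using hμ i), ?_⟩
      simpa [Fin.sum_univ_castSucc] using hsum
    push Not at hc
    obtain ⟨x₀, hax₀, hbx₀⟩ := hc
    have hgx₀ : 0 < g x₀ := by
      by_contra! hgx₀
      exact hbx₀.not_ge (h x₀ (Fin.lastCases hgx₀ hax₀))
    have h' (x : E) (hgx : g x ≤ 0) (hax : ∀ i : Fin m, a i.castSucc x ≤ 0) : b x ≤ 0 :=
      h x (Fin.lastCases hgx hax)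
    obtain ⟨μ, hμ, hsum⟩ := ih _ _ (sub_smul_apply_nonpos_of_eliminate hgx₀.ne' h')
    refine ⟨Fin.snoc μ (b x₀ / g x₀ - ∑ i, μ i * (a i.castSucc x₀ / g x₀)), ?_, ?_⟩
    · refine Fin.lastCases ?_ (fun i => by simpa using hμ i)
      have : ∑ i, μ i * (a i.castSucc x₀ / g x₀) ≤ 0 := Finset.sum_nonpos fun i _ =>
        mul_nonpos_of_nonneg_of_nonpos (hμ i) (div_nonpos_of_nonpos_of_nonneg (hax₀ i) hgx₀.le)
      simpa using by linarith [div_pos hbx₀ hgx₀]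
    · simpa [Fin.sum_univ_castSucc] using sum_smul_add_smul_eq_of_sum_smul_sub_smul_eq hsum

end Module.Dual

section LinearOrderedField

variable {𝕜 : Type*} [Field 𝕜] [LinearOrder 𝕜] [IsStrictOrderedRing 𝕜]

theorem nonneg_of_forall_le_add_mul {a s M : 𝕜} (h : ∀ t, 0 ≤ t → M ≤ a + t * s) : 0 ≤ s := by
  by_contra! hs
  have := h ((a - M + 1) / -s) (div_nonneg (by linarith [h 0 le_rfl]) (by linarith))
  have hcancel : (a - M + 1) / -s * s = -(a - M + 1) := by
    rw [div_neg, neg_mul, div_mul_cancel₀ _ hs.ne]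
  linarith

theorem dotProduct_sub_half_dotProduct_self_le {n : Type*} [Fintype n] (w y θ : n → 𝕜) :
    w ⬝ᵥ y - 1 / 2 * (w ⬝ᵥ w) ≤ 1 / 2 * ∑ j, (θ j - y j) ^ 2 + w ⬝ᵥ θ := by
  simp only [dotProduct, Finset.mul_sum, ← Finset.sum_sub_distrib, ← Finset.sum_add_distrib]
  exact Finset.sum_le_sum fun j _ => by linarith [sq_nonneg (θ j - y j + w j)]

namespace Matrix

theorem exists_nonneg_transpose_mulVec_eq_of_forall {m : ℕ} {n : Type*} [Fintype n]
    (A : Matrix (Fin m) n 𝕜) (b : n → 𝕜) (h : ∀ x, A *ᵥ x ≤ 0 → b ⬝ᵥ x ≤ 0) :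
    ∃ μ, 0 ≤ μ ∧ Aᵀ *ᵥ μ = b := by
  classical
  obtain ⟨μ, hμ, hsum⟩ := Module.Dual.exists_nonneg_sum_smul_eq_of_forall_nonpos
    (fun i => dotProductEquiv 𝕜 n (A i)) (dotProductEquiv 𝕜 n b) fun x hx => h x hx
  refine ⟨μ, hμ, (dotProductEquiv 𝕜 n).injective ?_⟩
  rw [mulVec_transpose, vecMul_eq_sum, map_sum]
  simpa only [map_smul] using hsum

theorem transpose_mulVec_dotProduct_add_le {m p n : Type*} [Fintype m] [Fintype p] [Fintype n]
    {A : Matrix m p 𝕜} {B : Matrix m n 𝕜} {c μ : m → 𝕜} {ξ : p → 𝕜} {θ : n → 𝕜} (hμ : 0 ≤ μ)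
    (h : A *ᵥ ξ + B *ᵥ θ ≤ c) : (Aᵀ *ᵥ μ) ⬝ᵥ ξ + (Bᵀ *ᵥ μ) ⬝ᵥ θ ≤ μ ⬝ᵥ c := by
  simpa only [mulVec_transpose, ← dotProduct_mulVec, ← dotProduct_add] using
    dotProduct_le_dotProduct_of_nonneg_left h hμ

end Matrix

end LinearOrderedField

/-- For a nonempty polyhedron `Q = {(ξ,θ) : Aξ + Bθ ≤ c}` and fixed `y`,
the objective `(1/2)‖θ − y‖₂² + dᵀξ` is bounded below on `Q` iff `−d = Aᵀλ` for some
componentwise nonnegative `λ`. -/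
theorem bounded_below_iff_farkas {m p n : ℕ}
    (A : Matrix (Fin m) (Fin p) ℝ) (B : Matrix (Fin m) (Fin n) ℝ)
    (c : Fin m → ℝ) (d : Fin p → ℝ)
    (hQ : ∃ ξ : Fin p → ℝ, ∃ θ : Fin n → ℝ, A.mulVec ξ + B.mulVec θ ≤ c)
    (y : Fin n → ℝ) :
    (∃ M : ℝ, ∀ ξ : Fin p → ℝ, ∀ θ : Fin n → ℝ, A.mulVec ξ + B.mulVec θ ≤ c →
      M ≤ (1 / 2) * (∑ j, (θ j - y j) ^ 2) + d ⬝ᵥ ξ) ↔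
    (∃ lam : Fin m → ℝ, 0 ≤ lam ∧ Aᵀ.mulVec lam = -d) := by
  constructor
  · rintro ⟨M, hM⟩
    obtain ⟨ξ₀, θ₀, h₀⟩ := hQ
    refine A.exists_nonneg_transpose_mulVec_eq_of_forall (-d) fun x hx => ?_
    have hray (t : ℝ) (ht : 0 ≤ t) : A *ᵥ (ξ₀ + t • x) + B *ᵥ θ₀ ≤ c := by
      rw [mulVec_add, mulVec_smul]
      have hstep : t • (A *ᵥ x) ≤ 0 := smul_nonpos_of_nonneg_of_nonpos ht hx
      exact (add_le_add_left (add_le_of_nonpos_right hstep) _).trans h₀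
    have hdx : 0 ≤ d ⬝ᵥ x := nonneg_of_forall_le_add_mul fun t ht => by
      have := hM _ _ (hray t ht)
      rwa [dotProduct_add, dotProduct_smul, smul_eq_mul, ← add_assoc] at this
    simpa [neg_dotProduct] using hdx
  · rintro ⟨μ, hμ, hAμ⟩
    set w := Bᵀ *ᵥ μ
    refine ⟨w ⬝ᵥ y - 1 / 2 * (w ⬝ᵥ w) - μ ⬝ᵥ c, fun ξ θ h => ?_⟩
    have hdual := transpose_mulVec_dotProduct_add_le hμ h
    rw [hAμ, neg_dotProduct] at hdual
    linarith [dotProduct_sub_half_dotProduct_self_le w y θ]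
end
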